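/- arXiv:2110.12031 — 6 statements merged into one kernel-verified Lean document; each statement's English description precedes it below -/
import Mathlib

section
/- Let (X, 𝒜, μ) be a σ-finite measure space and let (A_n)_{n∈ℕ} be an increasing sequence of measurable sets of finite measure with X = ∪_{n=1}^∞ A_n. Let 𝒮 denote the subspace of L¹(X,μ) consisting of integrable simple functions, and let S : 𝒮 → L¹(X,μ) be a linear map. Then S admits a (necessarily unique) extension to a semi-doubly stochastic operator on L¹(X,μ) if and only if S is nonnegative (Sφ ≥ 0 a.e. whenever φ ≥ 0 a.e.) and for every measurable set E with μ(E) < ∞ one has ∫_X S(χ_E) dμ = μ(E) and lim_{n→∞} ∫_X χ_E · S(χ_{A_n}) dμ ≤ μ(E). -/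
/-!
Positivity and preservation of integrals make `S` an `L¹`-contraction on simple functions
(split `φ = φ⁺ - φ⁻`), so it extends by density to a continuous `T`, and both properties pass to
the closure. For the semi-doubly stochastic bound, `χ_{B ∩ Aₙ} → χ_B` in `L¹`, while positivity
gives `∫_E T χ_{B ∩ Aₙ} ≤ ∫_E T χ_{Aₙ}`, an increasing sequence whose limit is at most `μ E`.
Conversely, for a semi-doubly stochastic `T` that sequence is increasing and bounded by `μ E`.
-/

open MeasureTheory Filter Topology

attribute [local instance] MeasureTheory.Lp.simpleFunc.smul
  MeasureTheory.Lp.simpleFunc.module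

open scoped ENNReal

namespace MeasureTheory

variable {X : Type*} [MeasurableSpace X] {μ : Measure X}

theorem Lp.posPart_nonneg {p : ℝ≥0∞} (f : Lp ℝ p μ) : 0 ≤ Lp.posPart f := by
  rw [← Lp.coeFn_nonneg]
  filter_upwards [Lp.coeFn_posPart f] with x hx
  simp [hx]

theorem Lp.negPart_nonneg {p : ℝ≥0∞} (f : Lp ℝ p μ) : 0 ≤ Lp.negPart f :=
  Lp.posPart_nonneg (-f)

theorem Lp.posPart_sub_negPart {p : ℝ≥0∞} (f : Lp ℝ p μ) : Lp.posPart f - Lp.negPart f = f := by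
  apply Lp.ext
  filter_upwards [Lp.coeFn_sub (Lp.posPart f) (Lp.negPart f), Lp.coeFn_posPart f,
    Lp.coeFn_negPart_eq_max f] with x hsub hpos hneg
  rw [hsub, Pi.sub_apply, hpos, hneg, max_zero_sub_max_neg_zero_eq_self]

theorem L1.SimpleFunc.posPart_sub_negPart (φ : Lp.simpleFunc ℝ 1 μ) :
    L1.SimpleFunc.posPart φ - L1.SimpleFunc.negPart φ = φ :=
  Subtype.ext (Lp.posPart_sub_negPart (φ : Lp ℝ 1 μ))

theorem L1.norm_eq_integral_of_nonneg {f : Lp ℝ 1 μ} (hf : 0 ≤ f) : ‖f‖ = ∫ x, f x ∂μ := by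
  rw [L1.norm_eq_integral_norm]
  refine integral_congr_ae ?_
  filter_upwards [(Lp.coeFn_nonneg f).2 hf] with x hx
  exact Real.norm_of_nonneg hx

theorem L1.norm_posPart_add_norm_negPart (f : Lp ℝ 1 μ) :
    ‖Lp.posPart f‖ + ‖Lp.negPart f‖ = ‖f‖ := by
  rw [L1.norm_eq_integral_of_nonneg (Lp.posPart_nonneg f),
    L1.norm_eq_integral_of_nonneg (Lp.negPart_nonneg f), L1.norm_eq_integral_norm,
    ← MeasureTheory.integral_add (L1.integrable_coeFn _) (L1.integrable_coeFn _)]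
  refine integral_congr_ae ?_
  filter_upwards [Lp.coeFn_posPart f, Lp.coeFn_negPart_eq_max f] with x hpos hneg
  rw [hpos, hneg, max_zero_add_max_neg_zero_eq_abs_self, Real.norm_eq_abs]

theorem L1.setIntegral_mono {f g : Lp ℝ 1 μ} (hfg : f ≤ g) (E : Set X) :
    ∫ x in E, f x ∂μ ≤ ∫ x in E, g x ∂μ :=
  setIntegral_mono_ae (L1.integrable_coeFn f).integrableOn (L1.integrable_coeFn g).integrableOn
    ((Lp.coeFn_le f g).2 hfg)

theorem indicatorConstLp_mono {p : ℝ≥0∞} {s t : Set X} (hs : MeasurableSet s) (hμs : μ s ≠ ∞)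
    (ht : MeasurableSet t) (hμt : μ t ≠ ∞) (hst : s ⊆ t) {c : ℝ} (hc : 0 ≤ c) :
    indicatorConstLp p hs hμs c ≤ indicatorConstLp p ht hμt c := by
  rw [← Lp.coeFn_le]
  filter_upwards [indicatorConstLp_coeFn (hs := hs) (hμs := hμs) (c := c),
    indicatorConstLp_coeFn (hs := ht) (hμs := hμt) (c := c)] with x hxs hxt
  rw [hxs, hxt]
  exact Set.indicator_le_indicator_of_subset hst (fun _ => hc) x

theorem indicatorConstLp_eq_smul_one {p : ℝ≥0∞} {s : Set X} (hs : MeasurableSet s)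
    (hμs : μ s ≠ ∞) (c : ℝ) :
    indicatorConstLp p hs hμs c = c • indicatorConstLp p hs hμs 1 := by
  apply Lp.ext
  filter_upwards [indicatorConstLp_coeFn (hs := hs) (hμs := hμs) (c := c),
    indicatorConstLp_coeFn (p := p) (hs := hs) (hμs := hμs) (c := (1 : ℝ)),
    Lp.coeFn_smul c (indicatorConstLp p hs hμs (1 : ℝ))] with x hc h1 hsmul
  rw [hsmul, Pi.smul_apply, h1, hc, ← Set.indicator_const_smul_apply, smul_eq_mul, mul_one]

section SimpleFuncOperator

variable (S : Lp.simpleFunc ℝ 1 μ →ₗ[ℝ] Lp ℝ 1 μ)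

theorem Lp.simpleFunc.integral_map_eq_of_indicatorConst
    (hS : ∀ (s : Set X) (hs : MeasurableSet s) (hμs : μ s ≠ ∞),
      ∫ x, S (Lp.simpleFunc.indicatorConst 1 hs hμs 1) x ∂μ = μ.real s)
    (φ : Lp.simpleFunc ℝ 1 μ) : ∫ x, S φ x ∂μ = ∫ x, (φ : Lp ℝ 1 μ) x ∂μ := by
  simp only [← L1.integral_eq_integral]
  induction φ using Lp.simpleFunc.induction one_ne_zero ENNReal.one_ne_top with
  | indicatorConst c hs hμs =>
    have hsmul : Lp.simpleFunc.indicatorConst 1 hs hμs.ne c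
        = c • Lp.simpleFunc.indicatorConst 1 hs hμs.ne 1 :=
      Subtype.ext (indicatorConstLp_eq_smul_one hs hμs.ne c)
    rw [hsmul, map_smul, Lp.simpleFunc.coe_smul, L1.integral_smul, L1.integral_smul,
      L1.integral_eq_integral, L1.integral_eq_integral, hS _ hs hμs.ne,
      Lp.simpleFunc.coe_indicatorConst, integral_indicatorConstLp, smul_eq_mul, smul_eq_mul,
      smul_eq_mul, mul_one]
  | add hf hg _ hf_eq hg_eq =>
    rw [map_add, L1.integral_add, hf_eq, hg_eq, AddSubgroup.coe_add, L1.integral_add]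

theorem Lp.simpleFunc.norm_map_le_of_nonneg
    (hpos : ∀ φ, 0 ≤ φ → 0 ≤ S φ) (hint : ∀ φ, ∫ x, S φ x ∂μ = ∫ x, (φ : Lp ℝ 1 μ) x ∂μ)
    (φ : Lp.simpleFunc ℝ 1 μ) : ‖S φ‖ ≤ ‖φ‖ := by
  have hnorm : ∀ ψ, 0 ≤ ψ → ‖S ψ‖ = ‖(ψ : Lp ℝ 1 μ)‖ := fun ψ hψ => by
    rw [L1.norm_eq_integral_of_nonneg (hpos ψ hψ), hint, L1.norm_eq_integral_of_nonneg hψ]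
  calc ‖S φ‖ = ‖S (L1.SimpleFunc.posPart φ) - S (L1.SimpleFunc.negPart φ)‖ := by
        rw [← map_sub, L1.SimpleFunc.posPart_sub_negPart]
    _ ≤ ‖S (L1.SimpleFunc.posPart φ)‖ + ‖S (L1.SimpleFunc.negPart φ)‖ := norm_sub_le _ _
    _ = ‖φ‖ := by
      rw [hnorm _ (Lp.posPart_nonneg _), hnorm _ (Lp.negPart_nonneg _),
        L1.SimpleFunc.coe_posPart, L1.SimpleFunc.coe_negPart, L1.norm_posPart_add_norm_negPart]
      rfl

end SimpleFuncOperator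

theorem Lp.simpleFunc.exists_extension_of_norm_le {E F : Type*} [NormedAddCommGroup E]
    [NormedSpace ℝ E] [NormedAddCommGroup F] [NormedSpace ℝ F] [CompleteSpace F]
    {p : ℝ≥0∞} [Fact (1 ≤ p)] (hp : p ≠ ∞) (S : Lp.simpleFunc E p μ →ₗ[ℝ] F) (C : ℝ)
    (hS : ∀ φ, ‖S φ‖ ≤ C * ‖φ‖) :
    ∃ T : Lp E p μ →L[ℝ] F, ∀ φ : Lp.simpleFunc E p μ, T φ = S φ :=
  ⟨(S.mkContinuous C hS).extend (Lp.simpleFunc.coeToLp X E ℝ), fun φ =>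
    ContinuousLinearMap.extend_eq _ (Lp.simpleFunc.denseRange hp)
      Lp.simpleFunc.isUniformInducing φ⟩

theorem Lp.map_nonneg_of_simpleFunc {F : Type*} [TopologicalSpace F] [Preorder F] [Zero F]
    [ClosedIciTopology F] {p : ℝ≥0∞} [Fact (1 ≤ p)] (hp : p ≠ ∞) {T : Lp ℝ p μ → F}
    (hT : Continuous T) (hTφ : ∀ φ : Lp.simpleFunc ℝ p μ, 0 ≤ φ → 0 ≤ T φ)
    {f : Lp ℝ p μ} (hf : 0 ≤ f) : 0 ≤ T f :=
  (Lp.simpleFunc.denseRange_coeSimpleFuncNonnegToLpNonneg p μ ℝ hp).induction_on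
    (p := fun g => 0 ≤ T g) ⟨f, hf⟩ (isClosed_Ici.preimage (hT.comp continuous_subtype_val))
    fun φ => hTφ φ φ.2

theorem L1.integral_map_eq_of_simpleFunc {E : Type*} [NormedAddCommGroup E] [NormedSpace ℝ E]
    [CompleteSpace E] {Y : Type*} [MeasurableSpace Y] {ν : Measure Y} {T : Lp E 1 μ → Lp E 1 ν}
    (hT : Continuous T)
    (hTφ : ∀ φ : Lp.simpleFunc E 1 μ, ∫ y, T φ y ∂ν = ∫ x, (φ : Lp E 1 μ) x ∂μ)
    (f : Lp E 1 μ) : ∫ y, T f y ∂ν = ∫ x, f x ∂μ :=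
  (Lp.simpleFunc.denseRange ENNReal.one_ne_top).induction_on f
    (isClosed_eq (MeasureTheory.continuous_integral.comp hT) MeasureTheory.continuous_integral) hTφ

theorem tendsto_indicatorConstLp_inter_atTop {p : ℝ≥0∞} [Fact (1 ≤ p)] (hp : p ≠ ∞)
    {A : ℕ → Set X} (hA : ∀ n, MeasurableSet (A n)) (hAmono : Monotone A)
    (hAcover : ⋃ n, A n = Set.univ) {B : Set X} (hB : MeasurableSet B) (hμB : μ B ≠ ∞) (c : ℝ) :
    Tendsto (fun n => indicatorConstLp p (hB.inter (hA n))
        (measure_inter_lt_top_of_left_ne_top hμB).ne c) atTop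
      (𝓝 (indicatorConstLp p hB hμB c)) := by
  refine tendsto_indicatorConstLp_set hp ?_
  have hdiff : ∀ n, symmDiff (B ∩ A n) B = B \ A n := fun n => by
    rw [symmDiff_of_le Set.inter_subset_left, Set.sdiff_self_inter]
  simp only [hdiff]
  have hempty : ⋂ n, B \ A n = ∅ := by rw [← Set.sdiff_iUnion, hAcover, Set.sdiff_univ]
  have hlim := tendsto_measure_iInter_atTop (μ := μ)
    (fun n => (hB.diff (hA n)).nullMeasurableSet)
    (fun m n hmn => Set.sdiff_subset_sdiff_right (hAmono hmn))
    ⟨0, ((measure_mono Set.sdiff_subset).trans_lt hμB.lt_top).ne⟩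
  rwa [hempty, measure_empty] at hlim

section PositiveOperator

variable {T : Lp ℝ 1 μ →L[ℝ] Lp ℝ 1 μ}

theorem setIntegral_map_indicatorConstLp_mono (hT : ∀ f, 0 ≤ f → 0 ≤ T f) {s t : Set X}
    (hs : MeasurableSet s) (hμs : μ s ≠ ∞) (ht : MeasurableSet t) (hμt : μ t ≠ ∞) (hst : s ⊆ t)
    (E : Set X) :
    ∫ x in E, T (indicatorConstLp 1 hs hμs 1) x ∂μ
      ≤ ∫ x in E, T (indicatorConstLp 1 ht hμt 1) x ∂μ := by
  refine L1.setIntegral_mono (sub_nonneg.1 ?_) E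
  rw [← map_sub]
  exact hT _ (sub_nonneg.2 (indicatorConstLp_mono hs hμs ht hμt hst zero_le_one))

theorem monotone_setIntegral_map_indicatorConstLp (hT : ∀ f, 0 ≤ f → 0 ≤ T f)
    {A : ℕ → Set X} (hA : ∀ n, MeasurableSet (A n)) (hμA : ∀ n, μ (A n) ≠ ∞) (hAmono : Monotone A)
    (E : Set X) :
    Monotone fun n => ∫ x in E, T (indicatorConstLp 1 (hA n) (hμA n) 1) x ∂μ :=
  fun _ _ hmn => setIntegral_map_indicatorConstLp_mono hT _ _ _ _ (hAmono hmn) E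

theorem setIntegral_map_indicatorConstLp_le_of_iUnion_eq_univ (hT : ∀ f, 0 ≤ f → 0 ≤ T f)
    {A : ℕ → Set X} (hA : ∀ n, MeasurableSet (A n)) (hμA : ∀ n, μ (A n) ≠ ∞) (hAmono : Monotone A)
    (hAcover : ⋃ n, A n = Set.univ) (E : Set X) {c : ℝ}
    (hc : ∀ n, ∫ x in E, T (indicatorConstLp 1 (hA n) (hμA n) 1) x ∂μ ≤ c)
    {B : Set X} (hB : MeasurableSet B) (hμB : μ B ≠ ∞) :
    ∫ x in E, T (indicatorConstLp 1 hB hμB 1) x ∂μ ≤ c := by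
  refine le_of_tendsto (((continuous_setIntegral E).comp T.continuous).tendsto _ |>.comp
    (tendsto_indicatorConstLp_inter_atTop ENNReal.one_ne_top hA hAmono hAcover hB hμB 1))
    (Eventually.of_forall fun n => ?_)
  exact (setIntegral_map_indicatorConstLp_mono hT _ _ _ _ Set.inter_subset_right E).trans (hc n)

end PositiveOperator

end MeasureTheory

theorem extension_to_semi_doubly_stochastic_iff_general
    {X : Type*} [MeasurableSpace X] (μ : Measure X)
    (A : ℕ → Set X) (hAmeas : ∀ n, MeasurableSet (A n)) (hAfin : ∀ n, μ (A n) < ⊤)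
    (hAmono : Monotone A) (hAcover : ⋃ n, A n = Set.univ)
    (S : Lp.simpleFunc ℝ 1 μ →ₗ[ℝ] Lp ℝ 1 μ) :
    (∃ T : Lp ℝ 1 μ →L[ℝ] Lp ℝ 1 μ,
      (∀ φ : Lp.simpleFunc ℝ 1 μ, T ↑φ = S φ) ∧
      (∀ f : Lp ℝ 1 μ, 0 ≤ᵐ[μ] (f : X → ℝ) → 0 ≤ᵐ[μ] (T f : X → ℝ)) ∧
      (∀ f : Lp ℝ 1 μ, ∫ x, (T f : X → ℝ) x ∂μ = ∫ x, (f : X → ℝ) x ∂μ) ∧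
      (∀ E B : Set X, ∀ (_ : MeasurableSet E) (_ : μ E < ⊤) (hB : MeasurableSet B)
        (hBfin : μ B < ⊤),
        ∫ x in E, (T (indicatorConstLp 1 hB hBfin.ne (1 : ℝ)) : X → ℝ) x ∂μ ≤ (μ E).toReal))
    ↔
    ((∀ φ : Lp.simpleFunc ℝ 1 μ,
        0 ≤ᵐ[μ] ((φ : Lp ℝ 1 μ) : X → ℝ) → 0 ≤ᵐ[μ] (S φ : X → ℝ)) ∧
     (∀ E : Set X, ∀ (hE : MeasurableSet E) (hEfin : μ E < ⊤),
        ∫ x, (S (Lp.simpleFunc.indicatorConst 1 hE hEfin.ne (1 : ℝ)) : X → ℝ) x ∂μ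
          = (μ E).toReal) ∧
     (∀ E : Set X, MeasurableSet E → μ E < ⊤ →
        ∃ L : ℝ, L ≤ (μ E).toReal ∧
          Tendsto
            (fun n => ∫ x in E,
              (S (Lp.simpleFunc.indicatorConst 1 (hAmeas n) (hAfin n).ne (1 : ℝ)) : X → ℝ) x ∂μ)
            atTop (𝓝 L))) := by
  have hμA : ∀ n, μ (A n) ≠ ⊤ := fun n => (hAfin n).ne
  constructor
  · rintro ⟨T, hTS, hTpos, hTint, hTsds⟩
    have hT : ∀ f, 0 ≤ f → 0 ≤ T f := fun f hf =>
      (Lp.coeFn_nonneg _).1 (hTpos f ((Lp.coeFn_nonneg f).2 hf))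
    refine ⟨fun φ hφ => hTS φ ▸ hTpos φ hφ, fun E hE hμE => ?_, fun E hE hμE => ?_⟩
    · rw [← hTS, hTint, Lp.simpleFunc.coe_indicatorConst, integral_indicatorConstLp, smul_eq_mul,
        mul_one, measureReal_def]
    · have hbdd := fun n => hTsds E (A n) hE hμE (hAmeas n) (hAfin n)
      have hmono := monotone_setIntegral_map_indicatorConstLp hT hAmeas hμA hAmono E
      simp only [← hTS]
      exact ⟨_, ciSup_le hbdd, tendsto_atTop_ciSup hmono ⟨_, Set.forall_mem_range.2 hbdd⟩⟩
  · rintro ⟨hSpos, hSint, hSlim⟩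
    have hpos : ∀ φ, 0 ≤ φ → 0 ≤ S φ := fun φ hφ =>
      (Lp.coeFn_nonneg _).1 (hSpos φ ((Lp.simpleFunc.coeFn_nonneg φ).2 hφ))
    have hint := Lp.simpleFunc.integral_map_eq_of_indicatorConst S fun s hs hμs =>
      hSint s hs hμs.lt_top
    obtain ⟨T, hTS⟩ := Lp.simpleFunc.exists_extension_of_norm_le ENNReal.one_ne_top S 1
      fun φ => by simpa using Lp.simpleFunc.norm_map_le_of_nonneg S hpos hint φ
    have hT : ∀ f, 0 ≤ f → 0 ≤ T f := fun f =>
      Lp.map_nonneg_of_simpleFunc ENNReal.one_ne_top T.continuous fun φ hφ => hTS φ ▸ hpos φ hφ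
    refine ⟨T, hTS, fun f hf => (Lp.coeFn_nonneg _).2 (hT f ((Lp.coeFn_nonneg f).1 hf)),
      L1.integral_map_eq_of_simpleFunc T.continuous fun φ => hTS φ ▸ hint φ,
      fun E B hE hμE hB hμB => ?_⟩
    obtain ⟨L, hLE, hL⟩ := hSlim E hE hμE
    simp only [← hTS] at hL
    have hmono := monotone_setIntegral_map_indicatorConstLp hT hAmeas hμA hAmono E
    exact (setIntegral_map_indicatorConstLp_le_of_iUnion_eq_univ hT hAmeas hμA hAmono hAcover E
      (fun n => hmono.ge_of_tendsto hL n) hB hμB.ne).trans hLE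

/-- **Construction of semi-doubly stochastic operators.**  Let `(X,μ)` be σ-finite, exhausted
by an increasing sequence `Aₙ` of sets of finite measure, and let `S` be a linear map from the
subspace `𝒮` of integrable simple functions into `L¹(X,μ)`.  Then `S` extends to a semi-doubly
stochastic operator on `L¹(X,μ)` (a positive, integral-preserving operator `T` with
`∫_E T χ_B dμ ≤ μ(E)` for all sets `E, B` of finite measure) if and only if `S` is
nonnegative, `∫ S χ_E dμ = μ(E)` for every set `E` of finite measure, and
`lim_{n→∞} ∫ χ_E · S χ_{Aₙ} dμ ≤ μ(E)` for every such `E`. -/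
theorem extension_to_semi_doubly_stochastic_iff
    {X : Type*} [MeasurableSpace X] (μ : Measure X) [SigmaFinite μ]
    (A : ℕ → Set X) (hAmeas : ∀ n, MeasurableSet (A n)) (hAfin : ∀ n, μ (A n) < ⊤)
    (hAmono : Monotone A) (hAcover : ⋃ n, A n = Set.univ)
    (S : Lp.simpleFunc ℝ 1 μ →ₗ[ℝ] Lp ℝ 1 μ) :
    (∃ T : Lp ℝ 1 μ →L[ℝ] Lp ℝ 1 μ,
      (∀ φ : Lp.simpleFunc ℝ 1 μ, T ↑φ = S φ) ∧
      (∀ f : Lp ℝ 1 μ, 0 ≤ᵐ[μ] (f : X → ℝ) → 0 ≤ᵐ[μ] (T f : X → ℝ)) ∧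
      (∀ f : Lp ℝ 1 μ, ∫ x, (T f : X → ℝ) x ∂μ = ∫ x, (f : X → ℝ) x ∂μ) ∧
      (∀ E B : Set X, ∀ (_ : MeasurableSet E) (_ : μ E < ⊤) (hB : MeasurableSet B)
        (hBfin : μ B < ⊤),
        ∫ x in E, (T (indicatorConstLp 1 hB hBfin.ne (1 : ℝ)) : X → ℝ) x ∂μ ≤ (μ E).toReal))
    ↔
    ((∀ φ : Lp.simpleFunc ℝ 1 μ,
        0 ≤ᵐ[μ] ((φ : Lp ℝ 1 μ) : X → ℝ) → 0 ≤ᵐ[μ] (S φ : X → ℝ)) ∧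
     (∀ E : Set X, ∀ (hE : MeasurableSet E) (hEfin : μ E < ⊤),
        ∫ x, (S (Lp.simpleFunc.indicatorConst 1 hE hEfin.ne (1 : ℝ)) : X → ℝ) x ∂μ
          = (μ E).toReal) ∧
     (∀ E : Set X, MeasurableSet E → μ E < ⊤ →
        ∃ L : ℝ, L ≤ (μ E).toReal ∧
          Tendsto
            (fun n => ∫ x in E,
              (S (Lp.simpleFunc.indicatorConst 1 (hAmeas n) (hAfin n).ne (1 : ℝ)) : X → ℝ) x ∂μ)
            atTop (𝓝 L))) :=
  extension_to_semi_doubly_stochastic_iff_general μ A hAmeas hAfin hAmono hAcover S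
end

section
/- Let (X, μ) be a σ-finite measure space, a > 0, and P = {A_n : n ∈ ℕ} a countable measurable partition of X with μ(A_n) = a for every n. Define Φ_P : L¹(X,μ) → ℓ¹ by Φ_P f = (∫_{A_n} f dμ)_n and Ψ_P : ℓ¹ → L¹(X,μ) by Ψ_P(b) = Σ_n (b_n / a) χ_{A_n}. If G : L¹(X,μ) → L¹(X,μ) is a semi-doubly stochastic operator, then the operator D := Φ_P ∘ G ∘ Ψ_P : ℓ¹ → ℓ¹ is semi-doubly stochastic on ℓ¹, i.e. Σ_{m=1}^∞ ⟨De_n, e_m⟩ = 1 for every n and Σ_{n=1}^∞ ⟨De_n, e_m⟩ ≤ 1 for every m. -/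
/-!
`Ψ` sends the basis vector `eₙ` to `a⁻¹ χ_{Aₙ}`, hence a finite sum `Σ_{n ∈ s} eₙ` to `a⁻¹ χ_U`
with `U = ⋃_{n ∈ s} Aₙ` of finite measure.  The partial row sums of `D = Φ ∘ G ∘ Ψ` are therefore
`a⁻¹ ∫_{Aₘ} G χ_U ≤ a⁻¹ μ(Aₘ) = 1`.  Since the `Aₘ` partition `X`, the column sum
`Σₘ ⟨D eₙ, eₘ⟩` is `∫ G (Ψ eₙ) = ∫ Ψ eₙ = a⁻¹ μ(Aₙ) = 1`.  Positivity is inherited from `G`.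
-/

open MeasureTheory

local notation "ℓ¹" => lp (fun _ : ℕ => ℝ) 1

theorem lp.sum_single_apply {α : Type*} [DecidableEq α] {p : ENNReal} [Fact (1 ≤ p)]
    (s : Finset α) (c : ℝ) (i : α) :
    (∑ j ∈ s, lp.single p j c : lp (fun _ : α => ℝ) p) i = if i ∈ s then c else 0 := by
  rw [lp.coeFn_sum, Finset.sum_apply]
  simp [lp.single_apply, Pi.single_apply]

section Partition

variable {X : Type*} [MeasurableSpace X] {μ : Measure X} {A : ℕ → Set X}

theorem tsum_setIntegral_eq_integral_of_partition (hAmeas : ∀ n, MeasurableSet (A n))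
    (hAdisj : Pairwise (Function.onFun Disjoint A)) (hAcover : ⋃ n, A n = Set.univ)
    {f : X → ℝ} (hf : Integrable f μ) :
    ∑' n, ∫ x in A n, f x ∂μ = ∫ x, f x ∂μ := by
  rw [← integral_iUnion hAmeas hAdisj hf.integrableOn, hAcover, Measure.restrict_univ]

theorem ae_nonneg_of_ae_eq_tsum_indicator {c : ℕ → ℝ} (hc : ∀ n, 0 ≤ c n) {f : X → ℝ}
    (hf : f =ᵐ[μ] fun x => ∑' n, (A n).indicator (fun _ => c n) x) :
    0 ≤ᵐ[μ] f := by
  filter_upwards [hf] with x hx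
  rw [hx]
  exact tsum_nonneg fun n => Set.indicator_nonneg (fun _ _ => hc n) _

variable {a : ℝ} {Ψ : ℓ¹ →L[ℝ] Lp ℝ 1 μ}

theorem map_sum_single_eq_smul_indicatorConstLp (hAdisj : Pairwise (Function.onFun Disjoint A))
    (hΨ : ∀ b : ℓ¹, (Ψ b : X → ℝ) =ᵐ[μ] fun x => ∑' n, (A n).indicator (fun _ => b n / a) x)
    (s : Finset ℕ) (hU : MeasurableSet (⋃ n ∈ s, A n)) (hUfin : μ (⋃ n ∈ s, A n) ≠ ⊤) :
    Ψ (∑ n ∈ s, lp.single 1 n (1 : ℝ)) = a⁻¹ • indicatorConstLp 1 hU hUfin (1 : ℝ) := by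
  refine Lp.ext ?_
  filter_upwards [hΨ (∑ n ∈ s, lp.single 1 n (1 : ℝ)),
    Lp.coeFn_smul a⁻¹ (indicatorConstLp 1 hU hUfin (1 : ℝ)),
    indicatorConstLp_coeFn (p := 1) (hs := hU) (hμs := hUfin) (c := (1 : ℝ))]
    with x hΨx hsmul hind
  simp only [lp.sum_single_apply] at hΨx
  rw [hΨx, hsmul, Pi.smul_apply, hind, Finset.indicator_biUnion_apply s A (hAdisj.set_pairwise _),
    tsum_eq_sum (s := s) fun n hn => by simp [hn], Finset.smul_sum]
  refine Finset.sum_congr rfl fun n hn => ?_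
  rw [if_pos hn, ← Set.indicator_const_smul_apply, smul_eq_mul, mul_one, one_div]

theorem integral_map_single_eq_one (ha : 0 < a) (hAmeas : ∀ n, MeasurableSet (A n))
    (hAdisj : Pairwise (Function.onFun Disjoint A)) (hAa : ∀ n, μ (A n) = ENNReal.ofReal a)
    (hΨ : ∀ b : ℓ¹, (Ψ b : X → ℝ) =ᵐ[μ] fun x => ∑' n, (A n).indicator (fun _ => b n / a) x)
    (n : ℕ) :
    ∫ x, Ψ (lp.single 1 n (1 : ℝ)) x ∂μ = 1 := by
  have hU : MeasurableSet (⋃ m ∈ ({n} : Finset ℕ), A m) := by simpa using hAmeas n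
  have hUfin : μ (⋃ m ∈ ({n} : Finset ℕ), A m) ≠ ⊤ := by simp [hAa n]
  have hΨn := map_sum_single_eq_smul_indicatorConstLp hAdisj hΨ {n} hU hUfin
  rw [Finset.sum_singleton] at hΨn
  rw [hΨn, integral_congr_ae (Lp.coeFn_smul _ _)]
  simp only [Pi.smul_apply]
  rw [integral_smul, integral_indicatorConstLp]
  simp [Measure.real, hAa n, ha.le, ha.ne']

variable {Φ : Lp ℝ 1 μ →L[ℝ] ℓ¹}

theorem apply_nonneg_of_ae_nonneg (hΦ : ∀ (f : Lp ℝ 1 μ) (n : ℕ), Φ f n = ∫ x in A n, f x ∂μ)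
    {f : Lp ℝ 1 μ} (hf : 0 ≤ᵐ[μ] (f : X → ℝ)) (n : ℕ) :
    0 ≤ Φ f n := by
  rw [hΦ]
  exact setIntegral_nonneg_of_ae_restrict (ae_restrict_of_ae hf)

theorem tsum_apply_eq_integral (hAmeas : ∀ n, MeasurableSet (A n))
    (hAdisj : Pairwise (Function.onFun Disjoint A)) (hAcover : ⋃ n, A n = Set.univ)
    (hΦ : ∀ (f : Lp ℝ 1 μ) (n : ℕ), Φ f n = ∫ x in A n, f x ∂μ) (f : Lp ℝ 1 μ) :
    ∑' n, Φ f n = ∫ x, f x ∂μ := by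
  simp only [hΦ]
  exact tsum_setIntegral_eq_integral_of_partition hAmeas hAdisj hAcover (L1.integrable_coeFn f)

theorem sum_apply_comp_single_le_one (ha : 0 < a) (hAmeas : ∀ n, MeasurableSet (A n))
    (hAdisj : Pairwise (Function.onFun Disjoint A)) (hAa : ∀ n, μ (A n) = ENNReal.ofReal a)
    (hΦ : ∀ (f : Lp ℝ 1 μ) (n : ℕ), Φ f n = ∫ x in A n, f x ∂μ)
    (hΨ : ∀ b : ℓ¹, (Ψ b : X → ℝ) =ᵐ[μ] fun x => ∑' n, (A n).indicator (fun _ => b n / a) x)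
    {G : Lp ℝ 1 μ →L[ℝ] Lp ℝ 1 μ} (m : ℕ)
    (hGsemi : ∀ (B : Set X) (hB : MeasurableSet B) (hBfin : μ B < ⊤),
      ∫ x in A m, G (indicatorConstLp 1 hB hBfin.ne (1 : ℝ)) x ∂μ ≤ (μ (A m)).toReal)
    (s : Finset ℕ) :
    ∑ n ∈ s, Φ (G (Ψ (lp.single 1 n (1 : ℝ)))) m ≤ 1 := by
  have hU : MeasurableSet (⋃ n ∈ s, A n) := s.measurableSet_biUnion fun n _ => hAmeas n
  have hUfin : μ (⋃ n ∈ s, A n) < ⊤ := measure_biUnion_lt_top s.finite_toSet fun n _ => by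
    simp [hAa n]
  have hsum : ∑ n ∈ s, Φ (G (Ψ (lp.single 1 n (1 : ℝ)))) m
      = a⁻¹ * ∫ x in A m, G (indicatorConstLp 1 hU hUfin.ne (1 : ℝ)) x ∂μ := by
    rw [← Finset.sum_apply, ← lp.coeFn_sum, ← map_sum, ← map_sum, ← map_sum,
      map_sum_single_eq_smul_indicatorConstLp hAdisj hΨ s hU hUfin.ne, map_smul, map_smul,
      lp.coeFn_smul, Pi.smul_apply, smul_eq_mul, hΦ]
  have hAm : (μ (A m)).toReal = a := by rw [hAa m, ENNReal.toReal_ofReal ha.le]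
  rw [hsum, inv_mul_le_iff₀ ha, mul_one]
  exact hAm ▸ hGsemi _ hU hUfin

end Partition

theorem semiDoublyStochastic_transfer_L1_to_lp_general
    {X : Type*} [MeasurableSpace X] (μ : Measure X)
    (a : ℝ) (ha : 0 < a)
    (A : ℕ → Set X) (hAmeas : ∀ n, MeasurableSet (A n))
    (hAdisj : Pairwise (Function.onFun Disjoint A)) (hAcover : ⋃ n, A n = Set.univ)
    (hAa : ∀ n, μ (A n) = ENNReal.ofReal a)
    (Φ : Lp ℝ 1 μ →L[ℝ] lp (fun _ : ℕ => ℝ) 1)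
    (hΦ : ∀ (f : Lp ℝ 1 μ) (n : ℕ), Φ f n = ∫ x in A n, f x ∂μ)
    (Ψ : lp (fun _ : ℕ => ℝ) 1 →L[ℝ] Lp ℝ 1 μ)
    (hΨ : ∀ b : lp (fun _ : ℕ => ℝ) 1,
      (Ψ b : X → ℝ) =ᵐ[μ] fun x => ∑' n : ℕ, Set.indicator (A n) (fun _ => b n / a) x)
    (G : Lp ℝ 1 μ →L[ℝ] Lp ℝ 1 μ)
    (hGpos : ∀ f : Lp ℝ 1 μ, 0 ≤ᵐ[μ] (f : X → ℝ) → 0 ≤ᵐ[μ] (G f : X → ℝ))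
    (hGint : ∀ f : Lp ℝ 1 μ, ∫ x, (G f : X → ℝ) x ∂μ = ∫ x, (f : X → ℝ) x ∂μ)
    (hGsemi : ∀ E B : Set X, ∀ (_ : MeasurableSet E) (_ : μ E < ⊤) (hB : MeasurableSet B)
      (hBfin : μ B < ⊤),
      ∫ x in E, (G (indicatorConstLp 1 hB hBfin.ne (1 : ℝ)) : X → ℝ) x ∂μ ≤ (μ E).toReal) :
    (∀ x : lp (fun _ : ℕ => ℝ) 1, (∀ i, 0 ≤ x i) → ∀ i, 0 ≤ Φ (G (Ψ x)) i) ∧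
    (∀ n : ℕ, ∑' m : ℕ, Φ (G (Ψ (lp.single 1 n (1 : ℝ)))) m = 1) ∧
    (∀ m : ℕ, ∑' n : ℕ, Φ (G (Ψ (lp.single 1 n (1 : ℝ)))) m ≤ 1) := by
  refine ⟨fun b hb => apply_nonneg_of_ae_nonneg hΦ (hGpos _ ?_), fun n => ?_, fun m => ?_⟩
  · exact ae_nonneg_of_ae_eq_tsum_indicator (fun n => div_nonneg (hb n) ha.le) (hΨ b)
  · rw [tsum_apply_eq_integral hAmeas hAdisj hAcover hΦ, hGint,
      integral_map_single_eq_one ha hAmeas hAdisj hAa hΨ]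
  · refine tsum_le_of_sum_le' zero_le_one
      (sum_apply_comp_single_le_one ha hAmeas hAdisj hAa hΦ hΨ m fun B hB hBfin => ?_)
    exact hGsemi (A m) B (hAmeas m) (by simp [hAa m]) hB hBfin

/-- Let `P = {Aₙ}` be a countable measurable partition of a σ-finite measure space `(X,μ)`
with `μ(Aₙ) = a > 0` for all `n`, let `Φ_P : L¹(X,μ) → ℓ¹` be `f ↦ (∫_{Aₙ} f dμ)ₙ` and
`Ψ_P : ℓ¹ → L¹(X,μ)` be `b ↦ Σₙ (bₙ/a) χ_{Aₙ}`.  If `G` is a semi-doubly stochastic operator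
on `L¹(X,μ)`, then `D = Φ_P ∘ G ∘ Ψ_P` is a semi-doubly stochastic operator on `ℓ¹`:
it is positive, `Σₘ ⟨D eₙ, eₘ⟩ = 1` for every `n`, and `Σₙ ⟨D eₙ, eₘ⟩ ≤ 1` for every `m`. -/
theorem semiDoublyStochastic_transfer_L1_to_lp
    {X : Type*} [MeasurableSpace X] (μ : Measure X) [SigmaFinite μ]
    (a : ℝ) (ha : 0 < a)
    (A : ℕ → Set X) (hAmeas : ∀ n, MeasurableSet (A n))
    (hAdisj : Pairwise (Function.onFun Disjoint A)) (hAcover : ⋃ n, A n = Set.univ)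
    (hAa : ∀ n, μ (A n) = ENNReal.ofReal a)
    (Φ : Lp ℝ 1 μ →L[ℝ] lp (fun _ : ℕ => ℝ) 1)
    (hΦ : ∀ (f : Lp ℝ 1 μ) (n : ℕ), Φ f n = ∫ x in A n, f x ∂μ)
    (Ψ : lp (fun _ : ℕ => ℝ) 1 →L[ℝ] Lp ℝ 1 μ)
    (hΨ : ∀ b : lp (fun _ : ℕ => ℝ) 1,
      (Ψ b : X → ℝ) =ᵐ[μ] fun x => ∑' n : ℕ, Set.indicator (A n) (fun _ => b n / a) x)
    (G : Lp ℝ 1 μ →L[ℝ] Lp ℝ 1 μ)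
    (hGpos : ∀ f : Lp ℝ 1 μ, 0 ≤ᵐ[μ] (f : X → ℝ) → 0 ≤ᵐ[μ] (G f : X → ℝ))
    (hGint : ∀ f : Lp ℝ 1 μ, ∫ x, (G f : X → ℝ) x ∂μ = ∫ x, (f : X → ℝ) x ∂μ)
    (hGsemi : ∀ E B : Set X, ∀ (_ : MeasurableSet E) (_ : μ E < ⊤) (hB : MeasurableSet B)
      (hBfin : μ B < ⊤),
      ∫ x in E, (G (indicatorConstLp 1 hB hBfin.ne (1 : ℝ)) : X → ℝ) x ∂μ ≤ (μ E).toReal) :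
    (∀ x : lp (fun _ : ℕ => ℝ) 1, (∀ i, 0 ≤ x i) → ∀ i, 0 ≤ Φ (G (Ψ x)) i) ∧
    (∀ n : ℕ, ∑' m : ℕ, Φ (G (Ψ (lp.single 1 n (1 : ℝ)))) m = 1) ∧
    (∀ m : ℕ, ∑' n : ℕ, Φ (G (Ψ (lp.single 1 n (1 : ℝ)))) m ≤ 1) :=
  semiDoublyStochastic_transfer_L1_to_lp_general μ a ha A hAmeas hAdisj hAcover hAa Φ hΦ Ψ hΨ G
    hGpos hGint hGsemi
end

section
/- Let (X, μ) be a σ-finite measure space and f ∈ L¹(X,μ) nonnegative. Then the family S_f = {Sf : S a semi-doubly stochastic operator on L¹(X,μ)} is equi-integrable: for every ε > 0 there exists δ > 0 such that for every measurable set E with μ(E) < δ and every semi-doubly stochastic operator S on L¹(X,μ), ∫_E |Sf| dμ < ε. -/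
/-!
Split `f ≥ 0` as `g + (f - g)` with `g ≤ f`, `g ≤ c · 1_B` for a set `B` of finite measure, and
`∫ (f - g) < ε / 2`; truncating `f` at height `n` on `{|f| ≥ 1/n}` does this for large `n`, by
dominated convergence. For semi-doubly stochastic `S`, positivity and `∫_E S 1_B ≤ μ E` give
`∫_E S g ≤ c μ(E)`, while positivity and preservation of integrals give
`∫_E S (f - g) ≤ ∫ (f - g)`. Hence `δ = ε / (2 (c + 1))` works, uniformly in `S`.
-/

open MeasureTheory

def IsSemiDoublyStochastic {X : Type*} [MeasurableSpace X] {μ : Measure X}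
    (T : Lp ℝ 1 μ →L[ℝ] Lp ℝ 1 μ) : Prop :=
  (∀ f : Lp ℝ 1 μ, 0 ≤ᵐ[μ] (f : X → ℝ) → 0 ≤ᵐ[μ] (T f : X → ℝ)) ∧
  (∀ f : Lp ℝ 1 μ, ∫ x, (T f : X → ℝ) x ∂μ = ∫ x, (f : X → ℝ) x ∂μ) ∧
  (∀ E B : Set X, ∀ (_ : MeasurableSet E) (_ : μ E < ⊤) (hB : MeasurableSet B)
    (hBfin : μ B < ⊤),
    ∫ x in E, (T (indicatorConstLp 1 hB hBfin.ne (1 : ℝ)) : X → ℝ) x ∂μ ≤ (μ E).toReal)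

open Filter Topology

lemma abs_min_le_abs_left {α : Type*} [AddCommGroup α] [LinearOrder α] [IsOrderedAddMonoid α]
    {a b : α} (hb : 0 ≤ b) : |min a b| ≤ |a| :=
  abs_le.2 ⟨le_min (neg_abs_le a) ((neg_nonpos.2 (abs_nonneg a)).trans hb),
    (min_le_left a b).trans (le_abs_self a)⟩

lemma eventually_min_indicator_eq (a : ℝ) :
    ∀ᶠ n : ℕ in atTop, min a ({b : ℝ | (n : ℝ)⁻¹ ≤ |b|}.indicator (fun _ => (n : ℝ)) a) = a := by
  rcases eq_or_ne a 0 with rfl | ha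
  · exact Eventually.of_forall fun n =>
      min_eq_left (Set.indicator_nonneg (fun _ _ => n.cast_nonneg) _)
  have hinv : Tendsto (fun n : ℕ => (n : ℝ)⁻¹) atTop (𝓝 0) :=
    tendsto_inv_atTop_zero.comp tendsto_natCast_atTop_atTop
  filter_upwards [hinv.eventually_le_const (abs_pos.2 ha),
    tendsto_natCast_atTop_atTop.eventually_ge_atTop a] with n hn han
  rw [Set.indicator_of_mem (show a ∈ {b : ℝ | (n : ℝ)⁻¹ ≤ |b|} from hn), min_eq_left han]

section Truncation

variable {X : Type*} [MeasurableSpace X] {μ : Measure X}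

lemma tendsto_integral_min_indicator {f : X → ℝ} (hfm : StronglyMeasurable f)
    (hfi : Integrable f μ) :
    Tendsto
      (fun n : ℕ => ∫ x, min (f x) ({y | (n : ℝ)⁻¹ ≤ |f y|}.indicator (fun _ => (n : ℝ)) x) ∂μ)
      atTop (𝓝 (∫ x, f x ∂μ)) := by
  refine tendsto_integral_of_dominated_convergence (fun x => |f x|) (fun n => ?_) hfi.abs
    (fun n => Eventually.of_forall fun x => ?_) (Eventually.of_forall fun x => ?_)
  · exact (hfm.measurable.min (measurable_const.indicator
      (measurableSet_le measurable_const hfm.measurable.abs))).aestronglyMeasurable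
  · exact abs_min_le_abs_left (Set.indicator_nonneg (fun _ _ => n.cast_nonneg) x)
  · exact tendsto_const_nhds.congr' ((eventually_min_indicator_eq (f x)).mono fun n hn => hn.symm)

lemma exists_le_le_indicator_integral_sub_lt (f : Lp ℝ 1 μ) {ε : ℝ} (hε : 0 < ε) :
    ∃ (g : Lp ℝ 1 μ) (c : ℝ) (B : Set X), 0 ≤ c ∧ MeasurableSet B ∧ μ B < ⊤ ∧ g ≤ f ∧
      g ≤ᵐ[μ] B.indicator (fun _ => c) ∧ ∫ x, f x ∂μ - ∫ x, g x ∂μ < ε := by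
  have hfm := Lp.stronglyMeasurable f
  have hfi := L1.integrable_coeFn f
  obtain ⟨N, hN, hN1⟩ := (((tendsto_integral_min_indicator hfm hfi).const_sub
    (∫ x, f x ∂μ)).eventually_lt_const (by simpa using hε) |>.and (eventually_ge_atTop 1)).exists
  set B := {y | (N : ℝ)⁻¹ ≤ |f y|}
  set F := fun x => min (f x) (B.indicator (fun _ => (N : ℝ)) x)
  have hB : MeasurableSet B := measurableSet_le measurable_const hfm.measurable.abs
  have hFi : Integrable F μ :=
    hfi.mono (hfm.measurable.min (measurable_const.indicator hB)).aestronglyMeasurable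
      (Eventually.of_forall fun x =>
        abs_min_le_abs_left (Set.indicator_nonneg (fun _ _ => N.cast_nonneg) x))
  have hBfin : μ B < ⊤ := by
    simpa only [Real.norm_eq_abs] using hfi.measure_norm_ge_lt_top (by positivity)
  refine ⟨hFi.toL1 F, N, B, N.cast_nonneg, hB, hBfin, ?_, ?_, ?_⟩
  · exact (Lp.coeFn_le _ _).1 ((hFi.coeFn_toL1).mono fun x hx => hx ▸ min_le_left _ _)
  · exact (hFi.coeFn_toL1).mono fun x hx => hx ▸ min_le_right _ _
  · rwa [integral_congr_ae hFi.coeFn_toL1]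

end Truncation

namespace IsSemiDoublyStochastic

variable {X : Type*} [MeasurableSpace X] {μ : Measure X} {S : Lp ℝ 1 μ →L[ℝ] Lp ℝ 1 μ}

lemma nonneg (hS : IsSemiDoublyStochastic S) {f : Lp ℝ 1 μ} (hf : 0 ≤ f) : 0 ≤ S f :=
  (Lp.coeFn_nonneg _).1 (hS.1 f ((Lp.coeFn_nonneg f).2 hf))

lemma monotone (hS : IsSemiDoublyStochastic S) : Monotone S := fun f g hfg =>
  sub_nonneg.1 (map_sub S g f ▸ hS.nonneg (sub_nonneg.2 hfg))

lemma setIntegral_le_integral (hS : IsSemiDoublyStochastic S) {f : Lp ℝ 1 μ} (hf : 0 ≤ f)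
    (E : Set X) : ∫ x in E, S f x ∂μ ≤ ∫ x, f x ∂μ :=
  (MeasureTheory.setIntegral_le_integral (L1.integrable_coeFn _)
    ((Lp.coeFn_nonneg _).2 (hS.nonneg hf))).trans_eq (hS.2.1 f)

lemma setIntegral_le_of_le_indicator (hS : IsSemiDoublyStochastic S) {g : Lp ℝ 1 μ} {c : ℝ}
    (hc : 0 ≤ c) {B : Set X} (hB : MeasurableSet B) (hBfin : μ B < ⊤)
    (hgB : g ≤ᵐ[μ] B.indicator fun _ => c) {E : Set X} (hE : MeasurableSet E) (hEfin : μ E < ⊤) :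
    ∫ x in E, S g x ∂μ ≤ c * (μ E).toReal := by
  set χ := indicatorConstLp 1 hB hBfin.ne (1 : ℝ)
  have hg_le : g ≤ c • χ := by
    refine (Lp.coeFn_le _ _).1 ?_
    filter_upwards [hgB, Lp.coeFn_smul c χ, indicatorConstLp_coeFn (p := 1) (hs := hB)
      (hμs := hBfin.ne) (c := (1 : ℝ))] with x hgx hcχ hχ
    rw [hcχ, Pi.smul_apply, hχ, smul_eq_mul]
    by_cases hx : x ∈ B <;> simp_all
  calc ∫ x in E, S g x ∂μ ≤ ∫ x in E, S (c • χ) x ∂μ :=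
        setIntegral_mono_ae (L1.integrable_coeFn _).integrableOn
          (L1.integrable_coeFn _).integrableOn ((Lp.coeFn_le _ _).2 (hS.monotone hg_le))
    _ = c * ∫ x in E, S χ x ∂μ := by
        rw [map_smul, setIntegral_congr_ae hE ((Lp.coeFn_smul c (S χ)).mono fun x hx _ => hx)]
        exact integral_const_mul c _
    _ ≤ c * (μ E).toReal := mul_le_mul_of_nonneg_left (hS.2.2 E B hE hEfin hB hBfin) hc

lemma setIntegral_abs_le (hS : IsSemiDoublyStochastic S) {f g : Lp ℝ 1 μ} (hf : 0 ≤ f)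
    (hgf : g ≤ f) {c : ℝ} (hc : 0 ≤ c) {B : Set X} (hB : MeasurableSet B) (hBfin : μ B < ⊤)
    (hgB : g ≤ᵐ[μ] B.indicator fun _ => c) {E : Set X} (hE : MeasurableSet E) (hEfin : μ E < ⊤) :
    ∫ x in E, |S f x| ∂μ ≤ c * (μ E).toReal + (∫ x, f x ∂μ - ∫ x, g x ∂μ) := by
  have hsplit : (fun x => |S f x|) =ᵐ[μ] fun x => S g x + S (f - g) x := by
    filter_upwards [(Lp.coeFn_nonneg _).2 (hS.nonneg hf), Lp.coeFn_add (S g) (S (f - g))]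
      with x hfx hadd
    rw [abs_of_nonneg hfx, ← Pi.add_apply, ← hadd, ← map_add, add_sub_cancel]
  have hfg : ∫ x, (f - g) x ∂μ = ∫ x, f x ∂μ - ∫ x, g x ∂μ := by
    rw [integral_congr_ae (Lp.coeFn_sub f g)]
    exact integral_sub (L1.integrable_coeFn f) (L1.integrable_coeFn g)
  rw [setIntegral_congr_ae hE (hsplit.mono fun x hx _ => hx),
    integral_add (L1.integrable_coeFn _).integrableOn (L1.integrable_coeFn _).integrableOn, ← hfg]
  exact add_le_add (hS.setIntegral_le_of_le_indicator hc hB hBfin hgB hE hEfin)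
    (hS.setIntegral_le_integral (sub_nonneg.2 hgf) E)

end IsSemiDoublyStochastic

theorem equiIntegrable_semiDoublyStochastic_orbit_general
    {X : Type*} [MeasurableSpace X] (μ : Measure X)
    (f : Lp ℝ 1 μ) (hf : 0 ≤ᵐ[μ] (f : X → ℝ)) :
    ∀ ε : ℝ, 0 < ε → ∃ δ : ℝ, 0 < δ ∧
      ∀ E : Set X, MeasurableSet E → μ E < ENNReal.ofReal δ →
        ∀ S : Lp ℝ 1 μ →L[ℝ] Lp ℝ 1 μ, IsSemiDoublyStochastic S →
          ∫ x in E, |(S f : X → ℝ) x| ∂μ < ε := by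
  intro ε hε
  obtain ⟨g, c, B, hc, hB, hBfin, hgf, hgB, hfg⟩ :=
    exists_le_le_indicator_integral_sub_lt f (half_pos hε)
  refine ⟨ε / (2 * (c + 1)), by positivity, fun E hE hEδ S hS => ?_⟩
  have hEfin : μ E < ⊤ := hEδ.trans ENNReal.ofReal_lt_top
  have hcE : c * (μ E).toReal ≤ ε / 2 := by
    have hEδ' := (ENNReal.lt_ofReal_iff_toReal_lt hEfin.ne).1 hEδ
    calc c * (μ E).toReal ≤ (c + 1) * (ε / (2 * (c + 1))) := by
          gcongr; linarith
      _ = ε / 2 := by field_simp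
  calc ∫ x in E, |S f x| ∂μ ≤ c * (μ E).toReal + (∫ x, f x ∂μ - ∫ x, g x ∂μ) :=
        hS.setIntegral_abs_le ((Lp.coeFn_nonneg f).1 hf) hgf hc hB hBfin hgB hE hEfin
    _ < ε := by linarith

/-- **Equi-integrability of semi-doubly stochastic orbits.**  For a σ-finite measure space
`(X,μ)` and a nonnegative `f ∈ L¹(X,μ)`, the family `S_f = {Sf : S semi-doubly stochastic}` is
equi-integrable. -/
theorem equiIntegrable_semiDoublyStochastic_orbit
    {X : Type*} [MeasurableSpace X] (μ : Measure X) [SigmaFinite μ]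
    (f : Lp ℝ 1 μ) (hf : 0 ≤ᵐ[μ] (f : X → ℝ)) :
    ∀ ε : ℝ, 0 < ε → ∃ δ : ℝ, 0 < δ ∧
      ∀ E : Set X, MeasurableSet E → μ E < ENNReal.ofReal δ →
        ∀ S : Lp ℝ 1 μ →L[ℝ] Lp ℝ 1 μ, IsSemiDoublyStochastic S →
          ∫ x in E, |(S f : X → ℝ) x| ∂μ < ε :=
  equiIntegrable_semiDoublyStochastic_orbit_general μ f hf
end

section
/- Let (X, μ) be a σ-finite measure space, f, g ∈ L¹(X,μ), and suppose there exists a semi-doubly stochastic operator S on L¹(X,μ) with f = Sg. Then for every sublinear functional φ : ℝ → [0,∞) (i.e. φ is convex and positively homogeneous: φ(cx) = c·φ(x) for all c ≥ 0 and x ∈ ℝ), one has ∫_X φ∘f dμ ≤ ∫_X φ∘g dμ. -/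
/-!
A positively homogeneous `φ : ℝ → ℝ` is `φ x = φ 1 · x⁺ + φ (-1) · x⁻`, so with `φ ≥ 0` it suffices
to show `∫ (Sg)⁺ ≤ ∫ g⁺` and `∫ (Sg)⁻ ≤ ∫ g⁻`. Positivity of `S` gives `(Sg)⁺ ≤ S(g⁺)` a.e., and `S`
preserves integrals; the negative part follows by applying this to `-g`.
-/

open MeasureTheory

theorem apply_eq_mul_max_add_mul_max {φ : ℝ → ℝ}
    (hφ : ∀ c : ℝ, 0 ≤ c → ∀ x : ℝ, φ (c * x) = c * φ x) (x : ℝ) :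
    φ x = φ 1 * max x 0 + φ (-1) * max (-x) 0 := by
  rcases le_total 0 x with hx | hx
  · have := hφ x hx 1
    rw [mul_one] at this
    rw [this, max_eq_left hx, max_eq_right (neg_nonpos.mpr hx)]
    ring
  · have := hφ (-x) (neg_nonneg.mpr hx) (-1)
    rw [mul_neg_one, neg_neg] at this
    rw [this, max_eq_right hx, max_eq_left (neg_nonneg.mpr hx)]
    ring

theorem integral_comp_eq_of_posHomogeneous {X : Type*} [MeasurableSpace X] {μ : Measure X}
    {φ : ℝ → ℝ} (hφ : ∀ c : ℝ, 0 ≤ c → ∀ x : ℝ, φ (c * x) = c * φ x)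
    {h : X → ℝ} (hh : Integrable h μ) :
    ∫ x, φ (h x) ∂μ = φ 1 * ∫ x, max (h x) 0 ∂μ + φ (-1) * ∫ x, max (-h x) 0 ∂μ := by
  rw [show (fun x => φ (h x)) = fun x => φ 1 * max (h x) 0 + φ (-1) * max (-h x) 0 from
    funext fun x => apply_eq_mul_max_add_mul_max hφ (h x)]
  rw [integral_add (hh.pos_part.const_mul _) (hh.fun_neg.pos_part.const_mul _),
    integral_const_mul, integral_const_mul]

section PositiveOperator

variable {X : Type*} [MeasurableSpace X] {μ : Measure X} {T : Lp ℝ 1 μ →L[ℝ] Lp ℝ 1 μ}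

theorem apply_ae_le_apply_of_positive
    (hpos : ∀ f : Lp ℝ 1 μ, 0 ≤ᵐ[μ] (f : X → ℝ) → 0 ≤ᵐ[μ] (T f : X → ℝ))
    {f g : Lp ℝ 1 μ} (hfg : (f : X → ℝ) ≤ᵐ[μ] g) : (T f : X → ℝ) ≤ᵐ[μ] T g := by
  have hdiff : 0 ≤ᵐ[μ] (T (g - f) : X → ℝ) := by
    refine hpos _ ?_
    filter_upwards [Lp.coeFn_sub g f, hfg] with x hx hle
    rw [hx, Pi.sub_apply, Pi.zero_apply]
    exact sub_nonneg.mpr hle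
  rw [map_sub] at hdiff
  filter_upwards [hdiff, Lp.coeFn_sub (T g) (T f)] with x hx hsub
  rw [hsub, Pi.zero_apply, Pi.sub_apply] at hx
  exact sub_nonneg.mp hx

theorem integral_max_apply_le
    (hpos : ∀ f : Lp ℝ 1 μ, 0 ≤ᵐ[μ] (f : X → ℝ) → 0 ≤ᵐ[μ] (T f : X → ℝ))
    (hint : ∀ f : Lp ℝ 1 μ, ∫ x, (T f : X → ℝ) x ∂μ = ∫ x, (f : X → ℝ) x ∂μ) (g : Lp ℝ 1 μ) :
    ∫ x, max ((T g : X → ℝ) x) 0 ∂μ ≤ ∫ x, max ((g : X → ℝ) x) 0 ∂μ := by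
  have hgp := Lp.coeFn_posPart g
  have hT_nonneg : 0 ≤ᵐ[μ] (T (Lp.posPart g) : X → ℝ) :=
    hpos _ (hgp.mono fun x hx => by simp [hx])
  have hT_le : (T g : X → ℝ) ≤ᵐ[μ] T (Lp.posPart g) :=
    apply_ae_le_apply_of_positive hpos (hgp.mono fun x hx => by simp [hx])
  calc ∫ x, max ((T g : X → ℝ) x) 0 ∂μ ≤ ∫ x, (T (Lp.posPart g) : X → ℝ) x ∂μ :=
        integral_mono_ae (L1.integrable_coeFn _).pos_part (L1.integrable_coeFn _)
          (by filter_upwards [hT_nonneg, hT_le] with x h0 hle using max_le hle h0)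
    _ = ∫ x, (Lp.posPart g : X → ℝ) x ∂μ := hint _
    _ = ∫ x, max ((g : X → ℝ) x) 0 ∂μ := integral_congr_ae hgp

theorem integral_max_neg_apply_le
    (hpos : ∀ f : Lp ℝ 1 μ, 0 ≤ᵐ[μ] (f : X → ℝ) → 0 ≤ᵐ[μ] (T f : X → ℝ))
    (hint : ∀ f : Lp ℝ 1 μ, ∫ x, (T f : X → ℝ) x ∂μ = ∫ x, (f : X → ℝ) x ∂μ) (g : Lp ℝ 1 μ) :
    ∫ x, max (-(T g : X → ℝ) x) 0 ∂μ ≤ ∫ x, max (-(g : X → ℝ) x) 0 ∂μ := by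
  have h := integral_max_apply_le hpos hint (-g)
  rw [map_neg] at h
  calc ∫ x, max (-(T g : X → ℝ) x) 0 ∂μ = ∫ x, max ((-T g : Lp ℝ 1 μ) x) 0 ∂μ :=
        integral_congr_ae <| (Lp.coeFn_neg (T g)).mono fun x hx => by
          dsimp only; rw [hx, Pi.neg_apply]
    _ ≤ ∫ x, max ((-g : Lp ℝ 1 μ) x) 0 ∂μ := h
    _ = ∫ x, max (-(g : X → ℝ) x) 0 ∂μ :=
        integral_congr_ae <| (Lp.coeFn_neg g).mono fun x hx => by
          dsimp only; rw [hx, Pi.neg_apply]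

end PositiveOperator

theorem integral_sublinear_le_of_semiDoublyStochastic_general
    {X : Type*} [MeasurableSpace X] (μ : Measure X)
    (f g : Lp ℝ 1 μ) (S : Lp ℝ 1 μ →L[ℝ] Lp ℝ 1 μ)
    (hS : IsSemiDoublyStochastic S) (hfg : f = S g)
    (φ : ℝ → ℝ) (hφ0 : ∀ x, 0 ≤ φ x)
    (hφhom : ∀ c : ℝ, 0 ≤ c → ∀ x : ℝ, φ (c * x) = c * φ x) :
    ∫ x, φ ((f : X → ℝ) x) ∂μ ≤ ∫ x, φ ((g : X → ℝ) x) ∂μ := by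
  obtain ⟨hpos, hint, -⟩ := hS
  rw [integral_comp_eq_of_posHomogeneous hφhom (L1.integrable_coeFn f),
    integral_comp_eq_of_posHomogeneous hφhom (L1.integrable_coeFn g), hfg]
  exact add_le_add (mul_le_mul_of_nonneg_left (integral_max_apply_le hpos hint g) (hφ0 1))
    (mul_le_mul_of_nonneg_left (integral_max_neg_apply_le hpos hint g) (hφ0 (-1)))

/-- If `(X,μ)` is σ-finite, `S` is a semi-doubly stochastic operator on `L¹(X,μ)` and
`f = Sg`, then `∫ φ∘f dμ ≤ ∫ φ∘g dμ` for every sublinear functional `φ : ℝ → [0,∞)`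
(a nonnegative, convex, positively homogeneous function). -/
theorem integral_sublinear_le_of_semiDoublyStochastic
    {X : Type*} [MeasurableSpace X] (μ : Measure X) [SigmaFinite μ]
    (f g : Lp ℝ 1 μ) (S : Lp ℝ 1 μ →L[ℝ] Lp ℝ 1 μ)
    (hS : IsSemiDoublyStochastic S) (hfg : f = S g)
    (φ : ℝ → ℝ) (hφ0 : ∀ x, 0 ≤ φ x) (hφconv : ConvexOn ℝ Set.univ φ)
    (hφhom : ∀ c : ℝ, 0 ≤ c → ∀ x : ℝ, φ (c * x) = c * φ x) :
    ∫ x, φ ((f : X → ℝ) x) ∂μ ≤ ∫ x, φ ((g : X → ℝ) x) ∂μ :=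
  integral_sublinear_le_of_semiDoublyStochastic_general μ f g S hS hfg φ hφ0 hφhom
end

section
/- Let (X, μ) be a σ-finite measure space and f, g ∈ L¹(X,μ) nonnegative. Then there exists a sequence (S_k)_{k∈ℕ} of semi-doubly stochastic operators on L¹(X,μ) with ‖S_k f − g‖₁ → 0 if and only if there exists a sequence (I_n)_{n∈ℕ} of semi-doubly stochastic integral operators on L¹(X,μ) with ‖I_n f − g‖₁ → 0. -/
/-!
Integral operators with semi-doubly stochastic kernels are semi-doubly stochastic: Fubini and the
column condition give integral preservation, and the row condition gives `T χ_B ≤ 1`.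

Conversely, let `S` be semi-doubly stochastic and `f ∈ L¹`. Approximate `f` by a simple function
`s` and cut `X` into countably many measurable pieces `C_i` of finite measure on which `s` is
constant (σ-finiteness is needed for `{s = 0}`). The kernel `K(x, y) = (S χ_{C_i})(x) / μ(C_i)`
for `y ∈ C_i` is semi-doubly stochastic: its columns integrate to `1` because `S` preserves
integrals, and its rows to `∑ᵢ S χ_{C_i} = S χ_{⋃ C_i} ≤ 1`. Its integral operator `T` agrees
with `S` on every `χ_{C_i}`, hence on `s`, so `‖T f - S f‖ ≤ (1 + ‖S‖) ‖f - s‖`, and a diagonal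
choice turns `S_k f → g` into `T_k f → g`.
-/

open MeasureTheory Filter Topology

/-- `K : X × X → [0,∞)` is a semi-doubly stochastic kernel: `∫ K(x,y) dμ(x) = 1` for a.e. `y`
and `∫ K(x,y) dμ(y) ≤ 1` for a.e. `x`. -/
def IsSemiDoublyStochasticKernel {X : Type*} [MeasurableSpace X] (μ : Measure X)
    (K : X → X → ℝ) : Prop :=
  Measurable (Function.uncurry K) ∧ (∀ x y, 0 ≤ K x y) ∧
  (∀ᵐ y ∂μ, ∫⁻ x, ENNReal.ofReal (K x y) ∂μ = 1) ∧
  (∀ᵐ x ∂μ, ∫⁻ y, ENNReal.ofReal (K x y) ∂μ ≤ 1)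

/-- `T` is a semi-doubly stochastic integral operator: `(Tf)(x) = ∫ K(x,y) f(y) dμ(y)` for
some semi-doubly stochastic kernel `K`. -/
def IsSemiDoublyStochasticIntegralOperator {X : Type*} [MeasurableSpace X] {μ : Measure X}
    (T : Lp ℝ 1 μ →L[ℝ] Lp ℝ 1 μ) : Prop :=
  ∃ K : X → X → ℝ, IsSemiDoublyStochasticKernel μ K ∧
    ∀ f : Lp ℝ 1 μ, (T f : X → ℝ) =ᵐ[μ] fun x => ∫ y, K x y * (f : X → ℝ) y ∂μ

open scoped ENNReal

theorem ENNReal.ofReal_div_toReal {a : ℝ} {b : ℝ≥0∞} (hb0 : b ≠ 0) (hb : b ≠ ∞) :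
    ENNReal.ofReal (a / b.toReal) = ENNReal.ofReal a / b := by
  rw [ENNReal.ofReal_div_of_pos (ENNReal.toReal_pos hb0 hb), ENNReal.ofReal_toReal hb]

theorem ENNReal.ofReal_div_toReal_mul_le (a : ℝ) {b : ℝ≥0∞} (hb : b ≠ ∞) :
    ENNReal.ofReal (a / b.toReal) * b ≤ ENNReal.ofReal a := by
  rcases eq_or_ne b 0 with rfl | hb0
  · simp
  · rw [ENNReal.ofReal_div_toReal hb0 hb, ENNReal.div_mul_cancel hb0 hb]

section

variable {X : Type*} [MeasurableSpace X] {μ : Measure X}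

namespace IsSemiDoublyStochasticKernel

variable {K : X → X → ℝ} (hK : IsSemiDoublyStochasticKernel μ K)
include hK

theorem measurable_left (y : X) : Measurable fun x => K x y :=
  hK.1.comp (measurable_id.prodMk measurable_const)

theorem measurable_right (x : X) : Measurable fun y => K x y :=
  hK.1.comp (measurable_const.prodMk measurable_id)

theorem ae_integral_left_eq_one : ∀ᵐ y ∂μ, ∫ x, K x y ∂μ = 1 := by
  filter_upwards [hK.2.2.1] with y hy
  rw [integral_eq_lintegral_of_nonneg_ae (.of_forall fun x => hK.2.1 x y)
    (hK.measurable_left y).aestronglyMeasurable, hy, ENNReal.toReal_one]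

theorem ae_integral_mul_indicator_le_one {B : Set X} (hB : MeasurableSet B) :
    ∀ᵐ x ∂μ, ∫ y, K x y * B.indicator (fun _ => 1) y ∂μ ≤ 1 := by
  filter_upwards [hK.2.2.2] with x hx
  have hle : ∀ y, K x y * B.indicator (fun _ => 1) y ≤ K x y := fun y =>
    mul_le_of_le_one_right (hK.2.1 x y) (Set.indicator_apply_le' (fun _ => le_rfl)
      fun _ => zero_le_one)
  have hnn : ∀ y, 0 ≤ K x y * B.indicator (fun _ => 1) y := fun y =>
    mul_nonneg (hK.2.1 x y) (Set.indicator_nonneg (fun _ _ => zero_le_one) y)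
  rw [integral_eq_lintegral_of_nonneg_ae (.of_forall hnn)
    ((hK.measurable_right x).mul (measurable_const.indicator hB)).aestronglyMeasurable]
  refine ENNReal.toReal_le_of_le_ofReal zero_le_one ?_
  calc ∫⁻ y, ENNReal.ofReal (K x y * B.indicator (fun _ => 1) y) ∂μ
      ≤ ∫⁻ y, ENNReal.ofReal (K x y) ∂μ :=
        lintegral_mono fun y => ENNReal.ofReal_le_ofReal (hle y)
    _ ≤ ENNReal.ofReal 1 := by rwa [ENNReal.ofReal_one]

theorem aestronglyMeasurable_mul_comp_snd {h : X → ℝ} (hh : AEStronglyMeasurable h μ) :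
    AEStronglyMeasurable (fun p : X × X => K p.1 p.2 * h p.2) (μ.prod μ) :=
  hK.1.aestronglyMeasurable.mul hh.comp_snd

variable [SFinite μ]

theorem lintegral_enorm_mul_comp_snd {h : X → ℝ} (hh : AEStronglyMeasurable h μ) :
    ∫⁻ p : X × X, ‖K p.1 p.2 * h p.2‖ₑ ∂μ.prod μ = ∫⁻ y, ‖h y‖ₑ ∂μ := by
  rw [lintegral_prod_symm _ (hK.aestronglyMeasurable_mul_comp_snd hh).enorm]
  refine lintegral_congr_ae ?_
  filter_upwards [hK.2.2.1] with y hy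
  simp_rw [enorm_mul, Real.enorm_eq_ofReal (hK.2.1 _ y)]
  rw [lintegral_mul_const' _ _ enorm_ne_top, hy, one_mul]

theorem integrable_mul_comp_snd {h : X → ℝ} (hh : Integrable h μ) :
    Integrable (fun p : X × X => K p.1 p.2 * h p.2) (μ.prod μ) :=
  ⟨hK.aestronglyMeasurable_mul_comp_snd hh.1, by
    rw [HasFiniteIntegral, hK.lintegral_enorm_mul_comp_snd hh.1]; exact hh.2⟩

theorem integrable_integral_mul {h : X → ℝ} (hh : Integrable h μ) :
    Integrable (fun x => ∫ y, K x y * h y ∂μ) μ :=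
  (hK.integrable_mul_comp_snd hh).integral_prod_left

theorem integral_integral_mul {h : X → ℝ} (hh : Integrable h μ) :
    ∫ x, ∫ y, K x y * h y ∂μ ∂μ = ∫ y, h y ∂μ := by
  rw [integral_integral_swap (hK.integrable_mul_comp_snd hh)]
  refine integral_congr_ae ?_
  filter_upwards [hK.ae_integral_left_eq_one] with y hy
  rw [integral_mul_const, hy, one_mul]

theorem lintegral_enorm_integral_mul_le {h : X → ℝ} (hh : AEStronglyMeasurable h μ) :
    ∫⁻ x, ‖∫ y, K x y * h y ∂μ‖ₑ ∂μ ≤ ∫⁻ y, ‖h y‖ₑ ∂μ :=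
  calc ∫⁻ x, ‖∫ y, K x y * h y ∂μ‖ₑ ∂μ
      ≤ ∫⁻ x, ∫⁻ y, ‖K x y * h y‖ₑ ∂μ ∂μ :=
        lintegral_mono fun x => enorm_integral_le_lintegral_enorm _
    _ = ∫⁻ y, ‖h y‖ₑ ∂μ := by
        rw [← lintegral_prod _ (hK.aestronglyMeasurable_mul_comp_snd hh).enorm,
          hK.lintegral_enorm_mul_comp_snd hh]

theorem integral_mul_add_ae_eq {h h' : X → ℝ} (hh : Integrable h μ) (hh' : Integrable h' μ) :
    (fun x => ∫ y, K x y * (h + h') y ∂μ) =ᵐ[μ]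
      (fun x => ∫ y, K x y * h y ∂μ) + fun x => ∫ y, K x y * h' y ∂μ := by
  filter_upwards [(hK.integrable_mul_comp_snd hh).prod_right_ae,
    (hK.integrable_mul_comp_snd hh').prod_right_ae] with x hx hx'
  simp only [Pi.add_apply, mul_add]
  exact integral_add hx hx'

noncomputable def integralOperator : Lp ℝ 1 μ →L[ℝ] Lp ℝ 1 μ :=
  LinearMap.mkContinuous
    { toFun h := (hK.integrable_integral_mul (L1.integrable_coeFn h)).toL1 _
      map_add' h h' := by
        rw [← Integrable.toL1_add _ _ (hK.integrable_integral_mul (L1.integrable_coeFn h))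
          (hK.integrable_integral_mul (L1.integrable_coeFn h')), Integrable.toL1_eq_toL1_iff]
        refine .trans ?_ (hK.integral_mul_add_ae_eq (L1.integrable_coeFn h)
          (L1.integrable_coeFn h'))
        filter_upwards with x
        exact integral_congr_ae (by filter_upwards [Lp.coeFn_add h h'] with y hy; rw [hy])
      map_smul' c h := by
        rw [RingHom.id_apply, ← Integrable.toL1_smul', Integrable.toL1_eq_toL1_iff]
        filter_upwards with x
        simp only [Pi.smul_apply, smul_eq_mul, ← integral_const_mul]
        refine integral_congr_ae ?_
        filter_upwards [Lp.coeFn_smul c h] with y hy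
        rw [hy, Pi.smul_apply, smul_eq_mul]
        ring }
    1 fun h => by
      rw [LinearMap.coe_mk, AddHom.coe_mk, one_mul, Integrable.norm_toL1_eq_lintegral_enorm,
        Lp.norm_def, eLpNorm_one_eq_lintegral_enorm]
      exact ENNReal.toReal_mono (L1.integrable_coeFn h).2.ne
        (hK.lintegral_enorm_integral_mul_le (Lp.aestronglyMeasurable h))

theorem coeFn_integralOperator (h : Lp ℝ 1 μ) :
    hK.integralOperator h =ᵐ[μ] fun x => ∫ y, K x y * h y ∂μ :=
  Integrable.coeFn_toL1 (hK.integrable_integral_mul (L1.integrable_coeFn h))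

theorem norm_integralOperator_le : ‖hK.integralOperator‖ ≤ 1 :=
  LinearMap.mkContinuous_norm_le _ zero_le_one _

theorem isSemiDoublyStochasticIntegralOperator_integralOperator :
    IsSemiDoublyStochasticIntegralOperator hK.integralOperator :=
  ⟨K, hK, hK.coeFn_integralOperator⟩

end IsSemiDoublyStochasticKernel

theorem indicatorConstLp_one_nonneg {B : Set X} (hB : MeasurableSet B) (hμB : μ B ≠ ∞) :
    0 ≤ᵐ[μ] (indicatorConstLp 1 hB hμB (1 : ℝ) : X → ℝ) := by
  filter_upwards [indicatorConstLp_coeFn (p := 1) (hs := hB) (hμs := hμB) (c := (1 : ℝ))] with x hx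
  rw [hx]
  exact Set.indicator_nonneg (fun _ _ => zero_le_one) x

theorem IsSemiDoublyStochasticIntegralOperator.isSemiDoublyStochastic [SFinite μ]
    {T : Lp ℝ 1 μ →L[ℝ] Lp ℝ 1 μ} (hT : IsSemiDoublyStochasticIntegralOperator T) :
    IsSemiDoublyStochastic T := by
  obtain ⟨K, hK, hTK⟩ := hT
  refine ⟨fun f hf => ?_, fun f => ?_, fun E B hE hμE hB hμB => ?_⟩
  · filter_upwards [hTK f] with x hx
    rw [Pi.zero_apply, hx]
    exact integral_nonneg_of_ae (hf.mono fun y hy => mul_nonneg (hK.2.1 x y) hy)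
  · rw [integral_congr_ae (hTK f), hK.integral_integral_mul (L1.integrable_coeFn f)]
  · have hle : (T (indicatorConstLp 1 hB hμB.ne (1 : ℝ)) : X → ℝ) ≤ᵐ[μ] fun _ => 1 := by
      filter_upwards [hTK (indicatorConstLp 1 hB hμB.ne (1 : ℝ)),
        hK.ae_integral_mul_indicator_le_one hB] with x hx hx1
      rw [hx, integral_congr_ae ?_]
      · exact hx1
      filter_upwards [indicatorConstLp_coeFn (p := 1) (hs := hB) (hμs := hμB.ne) (c := (1 : ℝ))]
        with y hy
      rw [hy]
    calc ∫ x in E, (T (indicatorConstLp 1 hB hμB.ne (1 : ℝ)) : X → ℝ) x ∂μ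
        ≤ ∫ _ in E, (1 : ℝ) ∂μ :=
          setIntegral_mono_ae (L1.integrable_coeFn _).integrableOn (integrableOn_const hμE.ne) hle
      _ = (μ E).toReal := by rw [setIntegral_const, smul_eq_mul, mul_one, measureReal_def]

namespace IsSemiDoublyStochastic

variable {S : Lp ℝ 1 μ →L[ℝ] Lp ℝ 1 μ} (hS : IsSemiDoublyStochastic S)
include hS

theorem lintegral_ofReal_apply_indicator {B : Set X} (hB : MeasurableSet B) (hμB : μ B ≠ ∞) :
    ∫⁻ x, ENNReal.ofReal (S (indicatorConstLp 1 hB hμB (1 : ℝ)) x) ∂μ = μ B := by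
  rw [← ofReal_integral_eq_lintegral_ofReal (L1.integrable_coeFn _)
    (hS.1 _ (indicatorConstLp_one_nonneg hB hμB)), hS.2.1, integral_indicatorConstLp,
    smul_eq_mul, mul_one, measureReal_def, ENNReal.ofReal_toReal hμB]

theorem apply_indicator_le_one [SigmaFinite μ] {B : Set X} (hB : MeasurableSet B)
    (hμB : μ B ≠ ∞) : (S (indicatorConstLp 1 hB hμB (1 : ℝ)) : X → ℝ) ≤ᵐ[μ] fun _ => 1 := by
  set v := S (indicatorConstLp 1 hB hμB (1 : ℝ))
  have h := ae_nonneg_of_forall_setIntegral_nonneg_of_sigmaFinite (f := fun x => 1 - v x)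
    (fun E _ hμE => (integrableOn_const hμE.ne).sub (L1.integrable_coeFn v).integrableOn)
    fun E hE hμE => by
      rw [integral_sub (integrableOn_const hμE.ne).integrable (L1.integrable_coeFn v).restrict,
        setIntegral_const, smul_eq_mul, mul_one, sub_nonneg]
      exact hS.2.2 E B hE hμE hB (lt_top_iff_ne_top.2 hμB)
  filter_upwards [h] with x hx
  simpa [sub_nonneg] using hx

end IsSemiDoublyStochastic

section Fibers

variable {ι : Type*} {N : X → ι}

theorem ae_measure_preimage_singleton_ne_zero [Countable ι] (N : X → ι) :
    ∀ᵐ y ∂μ, μ (N ⁻¹' {N y}) ≠ 0 := by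
  have hnull : {y | ¬μ (N ⁻¹' {N y}) ≠ 0} = ⋃ i ∈ {i | μ (N ⁻¹' {i}) = 0}, N ⁻¹' {i} := by
    ext y; simp
  rw [ae_iff, hnull, measure_biUnion_null_iff (Set.to_countable _)]
  exact fun i hi => hi

/-- On the fibre `N ⁻¹' {i}` the kernel is `k i x / μ (N ⁻¹' {i})`, so its integral operator
sends the indicator of that fibre to `k i`; on null fibres the division by `0` gives `0`, which
only affects a null set of columns. -/
noncomputable def fiberKernel (μ : Measure X) (N : X → ι) (k : ι → X → ℝ) (x y : X) : ℝ :=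
  k (N y) x / μ.real (N ⁻¹' {N y})

variable [MeasurableSpace ι] [MeasurableSingletonClass ι] {k : ι → X → ℝ}

theorem integral_fiberKernel_mul_indicator (hN : Measurable N) {i : ι}
    (hi0 : μ (N ⁻¹' {i}) ≠ 0) (hi : μ (N ⁻¹' {i}) ≠ ∞) (x : X) :
    ∫ y, fiberKernel μ N k x y * (N ⁻¹' {i}).indicator (fun _ => 1) y ∂μ = k i x := by
  calc ∫ y, fiberKernel μ N k x y * (N ⁻¹' {i}).indicator (fun _ => 1) y ∂μ
      = ∫ _ in N ⁻¹' {i}, k i x / μ.real (N ⁻¹' {i}) ∂μ := by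
        rw [← integral_indicator (hN (measurableSet_singleton i))]
        congr 1 with y
        by_cases hy : N y = i <;> simp [Set.indicator, hy, fiberKernel]
    _ = k i x := by
        rw [setIntegral_const, smul_eq_mul, mul_div_cancel₀ _ ((measureReal_ne_zero_iff hi).2 hi0)]

variable [Countable ι]

theorem isSemiDoublyStochasticKernel_fiberKernel (hN : Measurable N)
    (hfin : ∀ i, μ (N ⁻¹' {i}) ≠ ∞) (hk : ∀ i, Measurable (k i)) (hk0 : ∀ i x, 0 ≤ k i x)
    (hint : ∀ i, ∫⁻ x, ENNReal.ofReal (k i x) ∂μ = μ (N ⁻¹' {i}))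
    (hsum : ∀ᵐ x ∂μ, ∑' i, ENNReal.ofReal (k i x) ≤ 1) :
    IsSemiDoublyStochasticKernel μ (fiberKernel μ N k) := by
  refine ⟨?_, fun x y => div_nonneg (hk0 _ _) measureReal_nonneg, ?_, ?_⟩
  · have hF : Measurable fun q : X × ι => k q.2 q.1 / μ.real (N ⁻¹' {q.2}) :=
      measurable_from_prod_countable_left fun i => (hk i).div_const (μ.real (N ⁻¹' {i}))
    exact hF.comp (measurable_fst.prodMk (hN.comp measurable_snd))
  · filter_upwards [ae_measure_preimage_singleton_ne_zero N] with y hy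
    simp_rw [fiberKernel, Measure.real, ENNReal.ofReal_div_toReal hy (hfin _),
      ENNReal.div_eq_inv_mul]
    rw [lintegral_const_mul _ (hk _).ennreal_ofReal, hint, ENNReal.inv_mul_cancel hy (hfin _)]
  · filter_upwards [hsum] with x hx
    calc ∫⁻ y, ENNReal.ofReal (fiberKernel μ N k x y) ∂μ
        = ∑' i, ENNReal.ofReal (k i x / μ.real (N ⁻¹' {i})) * μ (N ⁻¹' {i}) := by
          unfold fiberKernel
          rw [← lintegral_map (f := fun i => ENNReal.ofReal (k i x / μ.real (N ⁻¹' {i})))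
            (measurable_of_countable _) hN, lintegral_countable']
          simp only [Measure.map_apply hN (measurableSet_singleton _)]
      _ ≤ ∑' i, ENNReal.ofReal (k i x) :=
          ENNReal.tsum_le_tsum fun i => ENNReal.ofReal_div_toReal_mul_le _ (hfin i)
      _ ≤ 1 := hx

end Fibers

section FiberIndicator

variable {ι : Type*} [MeasurableSpace ι] [MeasurableSingletonClass ι] {N : X → ι}

noncomputable def fiberIndicator (hN : Measurable N) (hfin : ∀ i, μ (N ⁻¹' {i}) ≠ ∞) (i : ι) :
    Lp ℝ 1 μ :=
  indicatorConstLp 1 (hN (measurableSet_singleton i)) (hfin i) 1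

variable {S : Lp ℝ 1 μ →L[ℝ] Lp ℝ 1 μ} (hS : IsSemiDoublyStochastic S) (hN : Measurable N)
  (hfin : ∀ i, μ (N ⁻¹' {i}) ≠ ∞)
variable [Countable ι]
include hS hN

theorem IsSemiDoublyStochastic.ae_sum_apply_fiberIndicator_le_one [SigmaFinite μ]
    (s : Finset ι) : ∀ᵐ x ∂μ, ∑ i ∈ s, S (fiberIndicator hN hfin i) x ≤ 1 := by
  classical
  have hU : MeasurableSet (N ⁻¹' s) := hN s.measurableSet
  have hμU : μ (N ⁻¹' s) ≠ ∞ := by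
    rw [← Finset.set_biUnion_preimage_singleton]
    exact ((measure_biUnion_finset_le s _).trans_lt
      (ENNReal.sum_lt_top.2 fun i _ => (hfin i).lt_top)).ne
  have hsum : ∑ i ∈ s, fiberIndicator hN hfin i = indicatorConstLp 1 hU hμU (1 : ℝ) := by
    refine Lp.ext ((Lp.coeFn_fun_finsetSum _ _).trans ?_)
    filter_upwards [indicatorConstLp_coeFn (p := 1) (hs := hU) (hμs := hμU) (c := (1 : ℝ)),
      ae_all_iff.2 fun i => indicatorConstLp_coeFn (p := 1) (hs := hN (measurableSet_singleton i))
        (hμs := hfin i) (c := (1 : ℝ))] with x h1 h2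
    simp only [fiberIndicator, h1, h2, Set.indicator_apply, Set.mem_preimage, Finset.mem_coe,
      Set.mem_singleton_iff]
    exact Finset.sum_ite_eq s (N x) _
  filter_upwards [Lp.coeFn_fun_finsetSum s (fun i => S (fiberIndicator hN hfin i)),
    hS.apply_indicator_le_one hU hμU] with x h1 h2
  rw [← h1, ← map_sum, hsum]
  exact h2

theorem IsSemiDoublyStochastic.exists_kernel_integralOperator_fiberIndicator_eq [SigmaFinite μ] :
    ∃ (K : X → X → ℝ) (hK : IsSemiDoublyStochasticKernel μ K),
      ∀ i, hK.integralOperator (fiberIndicator hN hfin i) = S (fiberIndicator hN hfin i) := by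
  choose k hk hk0 hkS using fun i => (Lp.aestronglyMeasurable
    (S (fiberIndicator hN hfin i))).aemeasurable.exists_measurable_nonneg
    (hS.1 _ (indicatorConstLp_one_nonneg _ _))
  have hint : ∀ i, ∫⁻ x, ENNReal.ofReal (k i x) ∂μ = μ (N ⁻¹' {i}) := fun i =>
    (lintegral_congr_ae ((hkS i).mono fun x hx => congrArg ENNReal.ofReal hx.symm)).trans
      (hS.lintegral_ofReal_apply_indicator (hN (measurableSet_singleton i)) (hfin i))
  have hsum : ∀ᵐ x ∂μ, ∑' i, ENNReal.ofReal (k i x) ≤ 1 := by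
    filter_upwards [ae_all_iff.2 (hS.ae_sum_apply_fiberIndicator_le_one hN hfin),
      ae_all_iff.2 hkS] with x hx hkx
    rw [ENNReal.tsum_eq_iSup_sum]
    refine iSup_le fun s => ?_
    rw [← ENNReal.ofReal_sum_of_nonneg fun i _ => hk0 i x]
    exact ENNReal.ofReal_le_one.2 (by simpa [hkx] using hx s)
  have hK := isSemiDoublyStochasticKernel_fiberKernel hN hfin hk hk0 hint hsum
  refine ⟨_, hK, fun i => ?_⟩
  rcases eq_or_ne (μ (N ⁻¹' {i})) 0 with hi0 | hi0
  · have hχ : fiberIndicator hN hfin i = 0 := by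
      rw [← norm_eq_zero, fiberIndicator, norm_indicatorConstLp one_ne_zero ENNReal.one_ne_top]
      simp [Measure.real, hi0]
    rw [hχ, map_zero, map_zero]
  refine Lp.ext ((hK.coeFn_integralOperator _).trans
    (EventuallyEq.trans (.of_forall fun x => ?_) (hkS i).symm))
  rw [← integral_fiberKernel_mul_indicator (k := k) hN hi0 (hfin i) x]
  refine integral_congr_ae ?_
  filter_upwards [indicatorConstLp_coeFn (p := 1) (hs := hN (measurableSet_singleton i))
    (hμs := hfin i) (c := (1 : ℝ))] with y hy
  rw [fiberIndicator, hy]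

end FiberIndicator

namespace MeasureTheory.SimpleFunc

variable (μ) [SigmaFinite μ] (g : SimpleFunc X ℝ)

/-- The fibres are the level sets `{g = v}`, `v ≠ 0` (index `(v, 0)`), and the pieces of `{g = 0}`
cut out by the disjointed spanning sets of `μ` (index `(0, n)`): all have finite measure when
`g ∈ L¹`, and `g` is a finite combination of their indicators. -/
noncomputable def partitionIndex (x : X) : g.range × ℕ :=
  (⟨g x, g.mem_range_self x⟩, if g x = 0 then spanningSetsIndex μ x else 0)

theorem measurable_partitionIndex : Measurable (g.partitionIndex μ) :=
  g.measurable.subtype_mk.prodMk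
    (Measurable.ite (g.measurableSet_fiber 0) (measurableSet_spanningSetsIndex μ) measurable_const)

variable {μ g}

theorem measure_partitionIndex_preimage_ne_top (hg : MemLp g 1 μ) (i : g.range × ℕ) :
    μ (g.partitionIndex μ ⁻¹' {i}) ≠ ∞ := by
  obtain ⟨⟨v, hv⟩, n⟩ := i
  rcases eq_or_ne v 0 with rfl | hv0
  · refine ne_top_of_le_ne_top (measure_spanningSets_lt_top μ n).ne (measure_mono fun x hx => ?_)
    simp only [partitionIndex, Set.mem_preimage, Set.mem_singleton_iff, Prod.mk.injEq,
      Subtype.mk.injEq] at hx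
    rw [← hx.2, if_pos hx.1]
    exact mem_spanningSetsIndex μ x
  · refine ne_top_of_le_ne_top
      (measure_preimage_lt_top_of_memLp one_ne_zero ENNReal.one_ne_top g hg v hv0).ne
      (measure_mono fun x hx => ?_)
    simp only [partitionIndex, Set.mem_preimage, Set.mem_singleton_iff, Prod.mk.injEq,
      Subtype.mk.injEq] at hx
    exact hx.1

theorem toLp_eq_sum_smul_fiberIndicator (hg : MemLp g 1 μ) :
    hg.toLp g = ∑ v : g.range, (v : ℝ) • fiberIndicator (g.measurable_partitionIndex μ)
      (measure_partitionIndex_preimage_ne_top hg) (v, 0) := by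
  refine Lp.ext (hg.coeFn_toLp.trans ?_)
  filter_upwards [Lp.coeFn_fun_finsetSum Finset.univ fun v : g.range => (v : ℝ) •
      fiberIndicator (g.measurable_partitionIndex μ) (measure_partitionIndex_preimage_ne_top hg)
        (v, 0),
    ae_all_iff.2 fun v : g.range => Lp.coeFn_smul (v : ℝ) (fiberIndicator (μ := μ)
      (g.measurable_partitionIndex μ) (measure_partitionIndex_preimage_ne_top hg) (v, 0)),
    ae_all_iff.2 fun v : g.range => indicatorConstLp_coeFn (p := 1)
      (hs := g.measurable_partitionIndex μ (measurableSet_singleton (v, 0)))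
      (hμs := measure_partitionIndex_preimage_ne_top hg (v, 0)) (c := (1 : ℝ))] with x h1 h2 h3
  rw [h1, Finset.sum_eq_single ⟨g x, g.mem_range_self x⟩]
  · rw [h2, Pi.smul_apply, smul_eq_mul, fiberIndicator, h3]
    by_cases hx : g x = 0 <;> simp [partitionIndex, hx]
  · intro v _ hv
    rw [h2, Pi.smul_apply, smul_eq_mul, fiberIndicator, h3]
    simp [partitionIndex, Prod.ext_iff, Ne.symm hv]
  · simp

end MeasureTheory.SimpleFunc

theorem IsSemiDoublyStochastic.exists_integralOperator_norm_sub_le [SigmaFinite μ]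
    {S : Lp ℝ 1 μ →L[ℝ] Lp ℝ 1 μ} (hS : IsSemiDoublyStochastic S) (f : Lp ℝ 1 μ) {ε : ℝ}
    (hε : 0 < ε) :
    ∃ T : Lp ℝ 1 μ →L[ℝ] Lp ℝ 1 μ,
      IsSemiDoublyStochasticIntegralOperator T ∧ ‖T f - S f‖ ≤ ε := by
  set δ := ε / (1 + ‖S‖)
  have hδ : 0 < δ := div_pos hε (by positivity)
  obtain ⟨g, hfg, hg⟩ := (Lp.memLp f).exists_simpleFunc_eLpNorm_sub_lt ENNReal.one_ne_top
    (ENNReal.ofReal_pos.2 hδ).ne'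
  obtain ⟨K, hK, hKS⟩ := hS.exists_kernel_integralOperator_fiberIndicator_eq
    (g.measurable_partitionIndex μ) (SimpleFunc.measure_partitionIndex_preimage_ne_top hg)
  set T := hK.integralOperator
  have hTS : T (hg.toLp g) = S (hg.toLp g) := by
    simp only [SimpleFunc.toLp_eq_sum_smul_fiberIndicator hg, map_sum, map_smul, T, hKS]
  have hfg' : ‖f - hg.toLp g‖ ≤ δ := by
    rw [Lp.norm_def,
      eLpNorm_congr_ae ((Lp.coeFn_sub _ _).trans (EventuallyEq.rfl.sub hg.coeFn_toLp))]
    exact ENNReal.toReal_le_of_le_ofReal hδ.le hfg.le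
  refine ⟨T, hK.isSemiDoublyStochasticIntegralOperator_integralOperator, ?_⟩
  calc ‖T f - S f‖ = ‖T (f - hg.toLp g) - S (f - hg.toLp g)‖ := by
        rw [map_sub, map_sub, hTS, sub_sub_sub_cancel_right]
    _ ≤ ‖T‖ * ‖f - hg.toLp g‖ + ‖S‖ * ‖f - hg.toLp g‖ :=
        norm_sub_le_of_le (T.le_opNorm _) (S.le_opNorm _)
    _ ≤ 1 * δ + ‖S‖ * δ := by
        gcongr
        exact hK.norm_integralOperator_le
    _ = ε := by
        rw [← add_mul]
        exact mul_div_cancel₀ ε (by positivity)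

end

theorem semiDoublyStochastic_approx_iff_integral_operator_approx_general
    {X : Type*} [MeasurableSpace X] (μ : Measure X) [SigmaFinite μ]
    (f g : Lp ℝ 1 μ) :
    (∃ S : ℕ → (Lp ℝ 1 μ →L[ℝ] Lp ℝ 1 μ),
      (∀ k, IsSemiDoublyStochastic (S k)) ∧
      Tendsto (fun k => ‖S k f - g‖) atTop (𝓝 0))
    ↔
    (∃ I : ℕ → (Lp ℝ 1 μ →L[ℝ] Lp ℝ 1 μ),
      (∀ n, IsSemiDoublyStochasticIntegralOperator (I n)) ∧
      Tendsto (fun n => ‖I n f - g‖) atTop (𝓝 0)) := by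
  refine ⟨fun ⟨S, hS, hSg⟩ => ?_,
    fun ⟨I, hI, hIg⟩ => ⟨I, fun n => (hI n).isSemiDoublyStochastic, hIg⟩⟩
  choose I hI hIS using fun k : ℕ =>
    (hS k).exists_integralOperator_norm_sub_le f (Nat.one_div_pos_of_nat (n := k))
  have hlim : Tendsto (fun k : ℕ => ‖S k f - g‖ + 1 / (k + 1)) atTop (𝓝 0) := by
    simpa using hSg.add tendsto_one_div_add_atTop_nhds_zero_nat
  refine ⟨I, hI, squeeze_zero (fun _ => norm_nonneg _) (fun k => ?_) hlim⟩
  calc ‖I k f - g‖ ≤ ‖I k f - S k f‖ + ‖S k f - g‖ := norm_sub_le_norm_sub_add_norm_sub _ _ _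
    _ ≤ ‖S k f - g‖ + 1 / (k + 1) := by linarith [hIS k]

/-- Let `(X,μ)` be σ-finite and `f, g ∈ L¹(X,μ)` nonnegative.  There is a sequence of
semi-doubly stochastic operators `(Sₖ)` with `‖Sₖf − g‖₁ → 0` if and only if there is a
sequence of semi-doubly stochastic *integral* operators `(Iₙ)` with `‖Iₙf − g‖₁ → 0`. -/
theorem semiDoublyStochastic_approx_iff_integral_operator_approx
    {X : Type*} [MeasurableSpace X] (μ : Measure X) [SigmaFinite μ]
    (f g : Lp ℝ 1 μ) (hf : 0 ≤ᵐ[μ] (f : X → ℝ)) (hg : 0 ≤ᵐ[μ] (g : X → ℝ)) :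
    (∃ S : ℕ → (Lp ℝ 1 μ →L[ℝ] Lp ℝ 1 μ),
      (∀ k, IsSemiDoublyStochastic (S k)) ∧
      Tendsto (fun k => ‖S k f - g‖) atTop (𝓝 0))
    ↔
    (∃ I : ℕ → (Lp ℝ 1 μ →L[ℝ] Lp ℝ 1 μ),
      (∀ n, IsSemiDoublyStochasticIntegralOperator (I n)) ∧
      Tendsto (fun n => ‖I n f - g‖) atTop (𝓝 0)) :=
  semiDoublyStochastic_approx_iff_integral_operator_approx_general μ f g
end

section
/- Let (X, μ) be a σ-finite measure space and f, g ∈ L¹(X,μ) nonnegative with ∫_X g dμ = ∫_X f dμ. If ∫_X max(g − u, 0) dμ ≤ ∫_X max(f − u, 0) dμ for every real u > 0, then for every increasing convex function φ : [0,∞) → [0,∞) with φ(0) = 0, one has ∫_X φ∘g dμ ≤ ∫_X φ∘f dμ (the integrals of these nonnegative measurable functions taken in [0,∞]). -/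
open MeasureTheory Filter Topology

/-! Since `φ` is convex and increasing with `φ 0 = 0`, it is the pointwise limit on `[0, ∞)` of
functions below it that are nonnegative combinations of hinges `t ↦ (t - u)⁺` with `u > 0`: on a
grid of mesh `s`, follow on each cell the secant of `φ` over the previous cell. For such
combinations the inequality is a nonnegative combination of the hypotheses, and Fatou's lemma
carries it over to `φ`. -/

theorem ConvexOn.slope_le_slope {𝕜 : Type*} [Field 𝕜] [LinearOrder 𝕜] [IsStrictOrderedRing 𝕜]
    {S : Set 𝕜} {f : 𝕜 → 𝕜} (hf : ConvexOn 𝕜 S f) {x y z w : 𝕜}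
    (hx : x ∈ S) (hw : w ∈ S) (hxy : x < y) (hyz : y ≤ z) (hzw : z < w) :
    (f y - f x) / (y - x) ≤ (f w - f z) / (w - z) := by
  have hy : y ∈ S := hf.1.ordConnected.out hx hw ⟨hxy.le, hyz.trans hzw.le⟩
  have hz : z ∈ S := hf.1.ordConnected.out hx hw ⟨hxy.le.trans hyz, hzw.le⟩
  calc (f y - f x) / (y - x) ≤ (f w - f y) / (w - y) :=
        hf.slope_mono_adjacent hx hw hxy (hyz.trans_lt hzw)
    _ = (f y - f w) / (y - w) := by rw [← neg_div_neg_eq, neg_sub, neg_sub]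
    _ ≤ (f z - f w) / (z - w) :=
        hf.secant_mono hw hy hz (hyz.trans_lt hzw).ne hzw.ne hyz
    _ = (f w - f z) / (w - z) := by rw [← neg_div_neg_eq, neg_sub, neg_sub]

noncomputable def hingeSum (c u : ℕ → ℝ) (N : ℕ) (t : ℝ) : ℝ :=
  ∑ k ∈ Finset.range N, c k * max (t - u k) 0

section hingeSum

variable {c u : ℕ → ℝ}

theorem hingeSum_nonneg (hc : ∀ k, 0 ≤ c k) (N : ℕ) (t : ℝ) : 0 ≤ hingeSum c u N t :=
  Finset.sum_nonneg fun k _ => mul_nonneg (hc k) (le_max_right _ _)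

theorem hingeSum_mono (hc : ∀ k, 0 ≤ c k) (t : ℝ) : Monotone fun N => hingeSum c u N t :=
  fun _ _ hMN => Finset.sum_le_sum_of_subset_of_nonneg (Finset.range_subset_range.2 hMN)
    fun k _ _ => mul_nonneg (hc k) (le_max_right _ _)

theorem continuous_hingeSum (N : ℕ) : Continuous (hingeSum c u N) := by
  unfold hingeSum
  fun_prop

theorem hingeSum_succ (N : ℕ) (t : ℝ) :
    hingeSum c u (N + 1) t = hingeSum c u N t + c N * max (t - u N) 0 :=
  Finset.sum_range_succ _ _

end hingeSum

section Integral

variable {X : Type*} [MeasurableSpace X] {μ : Measure X}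

theorem MeasureTheory.Integrable.max_sub_const_zero {f : X → ℝ} (hf : Integrable f μ) {u : ℝ}
    (hu : 0 ≤ u) : Integrable (fun x => max (f x - u) 0) μ := by
  refine hf.mono ((hf.1.sub aestronglyMeasurable_const).sup aestronglyMeasurable_const) ?_
  filter_upwards with x
  rw [Real.norm_eq_abs, Real.norm_eq_abs, abs_of_nonneg (le_max_right _ _)]
  exact max_le (by linarith [le_abs_self (f x)]) (abs_nonneg _)

theorem lintegral_hingeSum_comp_le {f g : X → ℝ} (hf : Integrable f μ) (hg : Integrable g μ)
    (hcut : ∀ u : ℝ, 0 < u → ∫ x, max (g x - u) 0 ∂μ ≤ ∫ x, max (f x - u) 0 ∂μ)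
    {c u : ℕ → ℝ} (hc : ∀ k, 0 ≤ c k) (hu : ∀ k, 0 < u k) (N : ℕ) :
    ∫⁻ x, ENNReal.ofReal (hingeSum c u N (g x)) ∂μ ≤
      ∫⁻ x, ENNReal.ofReal (hingeSum c u N (f x)) ∂μ := by
  have hterm : ∀ {h : X → ℝ}, Integrable h μ → ∀ k,
      Integrable (fun x => c k * max (h x - u k) 0) μ :=
    fun hh k => (hh.max_sub_const_zero (hu k).le).const_mul (c k)
  have hsum : ∀ {h : X → ℝ}, Integrable h μ → Integrable (fun x => hingeSum c u N (h x)) μ :=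
    fun hh => integrable_finsetSum _ fun k _ => hterm hh k
  rw [← ofReal_integral_eq_lintegral_ofReal (hsum hg)
      (.of_forall fun x => hingeSum_nonneg hc N (g x)),
    ← ofReal_integral_eq_lintegral_ofReal (hsum hf)
      (.of_forall fun x => hingeSum_nonneg hc N (f x))]
  refine ENNReal.ofReal_le_ofReal ?_
  simp only [hingeSum]
  rw [integral_finsetSum _ fun k _ => hterm hg k, integral_finsetSum _ fun k _ => hterm hf k]
  refine Finset.sum_le_sum fun k _ => ?_
  rw [integral_const_mul, integral_const_mul]
  exact mul_le_mul_of_nonneg_left (hcut _ (hu k)) (hc k)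

end Integral

noncomputable def gridSlope (φ : ℝ → ℝ) (s : ℝ) : ℕ → ℝ
  | 0 => 0
  | k + 1 => (φ ((k + 1) * s) - φ (k * s)) / s

/-- Vanishes on `(-∞, s]` and has slope `gridSlope φ s k`, the slope of `φ` on `[(k - 1) s, k s]`,
on `[k s, (k + 1) s]` for `1 ≤ k < N` and on `[N s, ∞)` for `k = N`. -/
noncomputable def gridApprox (φ : ℝ → ℝ) (s : ℝ) (N : ℕ) : ℝ → ℝ :=
  hingeSum (fun k => gridSlope φ s (k + 1) - gridSlope φ s k) (fun k => (k + 1) * s) N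

section gridApprox

variable {φ : ℝ → ℝ} {s : ℝ}

theorem gridSlope_succ_mul (hs : s ≠ 0) (k : ℕ) :
    gridSlope φ s (k + 1) * s = φ ((k + 1) * s) - φ (k * s) :=
  div_mul_cancel₀ _ hs

theorem gridApprox_eq_of_le (hs : 0 < s) (h0 : φ 0 = 0) {N : ℕ} {t : ℝ} (ht : N * s ≤ t) :
    gridApprox φ s N t = φ (N * s) + gridSlope φ s N * (t - (N + 1) * s) := by
  induction N with
  | zero => simp [gridApprox, hingeSum, gridSlope, h0]
  | succ N ih =>
    push_cast at ht ⊢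
    have hslope := gridSlope_succ_mul (φ := φ) hs.ne' N
    rw [gridApprox, hingeSum_succ, ← gridApprox, ih (by nlinarith), max_eq_left (by linarith)]
    linear_combination hslope

variable (hm : MonotoneOn φ (Set.Ici 0)) (hc : ConvexOn ℝ (Set.Ici 0) φ)
include hm hc

theorem gridSlope_mono (hs : 0 < s) : Monotone (gridSlope φ s) := by
  refine monotone_nat_of_le_succ fun k => ?_
  cases k with
  | zero =>
    simp only [gridSlope, CharP.cast_eq_zero, zero_add, one_mul, zero_mul]
    exact div_nonneg (sub_nonneg.2 (hm Set.self_mem_Ici hs.le hs.le)) hs.le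
  | succ k =>
    simp only [gridSlope]
    push_cast
    have key := hc.slope_le_slope (x := k * s) (y := (k + 1) * s) (z := (k + 1) * s)
      (w := (k + 1 + 1) * s) (Set.mem_Ici.2 (by positivity)) (Set.mem_Ici.2 (by positivity))
      (by nlinarith) le_rfl (by nlinarith)
    rwa [show ((k : ℝ) + 1) * s - k * s = s by ring,
      show ((k : ℝ) + 1 + 1) * s - (k + 1) * s = s by ring] at key

theorem gridSlope_succ_sub_nonneg (hs : 0 < s) (k : ℕ) :
    0 ≤ gridSlope φ s (k + 1) - gridSlope φ s k :=
  sub_nonneg.2 (gridSlope_mono hm hc hs k.le_succ)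

theorem gridSlope_le_sub (hs : 0 < s) {k : ℕ} {t : ℝ} (ht : k * s ≤ t) :
    gridSlope φ s k ≤ φ (t + 1) - φ t := by
  cases k with
  | zero =>
    have ht0 : 0 ≤ t := by simpa using ht
    exact sub_nonneg.2 (hm ht0 (Set.mem_Ici.2 (by linarith)) (by linarith))
  | succ k =>
    push_cast at ht
    have key := hc.slope_le_slope (x := k * s) (y := (k + 1) * s) (z := t) (w := t + 1)
      (Set.mem_Ici.2 (by positivity)) (Set.mem_Ici.2 (by nlinarith)) (by nlinarith) ht
      (by linarith)
    rwa [show ((k : ℝ) + 1) * s - k * s = s by ring, add_sub_cancel_left, div_one] at key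

theorem gridApprox_le (hφ0 : ∀ x : ℝ, 0 ≤ x → 0 ≤ φ x) (h0 : φ 0 = 0) (hs : 0 < s) (N : ℕ)
    {t : ℝ} (ht : 0 ≤ t) : gridApprox φ s N t ≤ φ t := by
  induction N with
  | zero => simpa [gridApprox, hingeSum] using hφ0 t ht
  | succ N ih =>
    rw [gridApprox, hingeSum_succ, ← gridApprox]
    rcases le_or_gt t ((N + 1) * s) with htN | htN
    · rw [max_eq_right (by linarith), mul_zero, add_zero]
      exact ih
    · rw [gridApprox_eq_of_le hs h0 (by nlinarith), max_eq_left (by linarith)]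
      have hslope := hc.slope_le_slope (x := N * s) (y := (N + 1) * s) (z := (N + 1) * s)
        (w := t) (Set.mem_Ici.2 (by positivity)) (Set.mem_Ici.2 ht) (by nlinarith) le_rfl htN
      rw [show ((N : ℝ) + 1) * s - N * s = s by ring, le_div_iff₀ (by linarith)] at hslope
      have hmono : φ (N * s) ≤ φ ((N + 1) * s) :=
        hm (Set.mem_Ici.2 (by positivity)) (Set.mem_Ici.2 (by positivity)) (by nlinarith)
      simp only [gridSlope] at hslope ⊢
      linarith

theorem sub_le_gridApprox (h0 : φ 0 = 0) (hs : 0 < s) {N : ℕ} {t : ℝ} (ht : 0 ≤ t)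
    (htN : t ≤ N * s) : φ t - 2 * s * (φ (t + 1) - φ t) ≤ gridApprox φ s N t := by
  set j := ⌊t / s⌋₊
  have hj : j * s ≤ t := (le_div_iff₀ hs).1 (Nat.floor_le (div_nonneg ht hs.le))
  have hj' : t < (j + 1) * s := (div_lt_iff₀ hs).1 (Nat.lt_floor_add_one _)
  have hjN : j ≤ N := Nat.floor_le_of_le ((div_le_iff₀ hs).2 htN)
  have hslope : gridSlope φ s j ≤ φ (t + 1) - φ t := gridSlope_le_sub hm hc hs hj
  have hslope0 : 0 ≤ gridSlope φ s j := gridSlope_mono hm hc hs (Nat.zero_le j)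
  have hgap : φ t - φ (j * s) ≤ s * (φ (t + 1) - φ t) := by
    rcases hj.eq_or_lt with hjt | hjt
    · rw [hjt, sub_self]
      exact mul_nonneg hs.le (sub_nonneg.2 (hm ht (Set.mem_Ici.2 (by linarith)) (by linarith)))
    · have key := hc.slope_le_slope (x := j * s) (y := t) (z := t) (w := t + 1)
        (Set.mem_Ici.2 (by positivity)) (Set.mem_Ici.2 (by linarith)) hjt le_rfl (by linarith)
      rw [add_sub_cancel_left, div_one, div_le_iff₀ (sub_pos.2 hjt)] at key
      nlinarith
  calc φ t - 2 * s * (φ (t + 1) - φ t)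
      ≤ φ (j * s) + gridSlope φ s j * (t - (j + 1) * s) := by nlinarith
    _ = gridApprox φ s j t := (gridApprox_eq_of_le hs h0 hj).symm
    _ ≤ gridApprox φ s N t := hingeSum_mono (gridSlope_succ_sub_nonneg hm hc hs) t hjN

theorem tendsto_gridApprox (hφ0 : ∀ x : ℝ, 0 ≤ x → 0 ≤ φ x) (h0 : φ 0 = 0) {t : ℝ}
    (ht : 0 ≤ t) :
    Tendsto (fun n : ℕ => gridApprox φ (1 / (n + 1)) ((n + 1) ^ 2) t) atTop (𝓝 (φ t)) := by
  have hlower : Tendsto (fun n : ℕ => φ t - 2 * (1 / ((n : ℝ) + 1)) * (φ (t + 1) - φ t))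
      atTop (𝓝 (φ t)) := by
    simpa using tendsto_const_nhds.sub
      ((tendsto_one_div_add_atTop_nhds_zero_nat.const_mul 2).mul_const (φ (t + 1) - φ t))
  refine tendsto_of_tendsto_of_tendsto_of_le_of_le' hlower tendsto_const_nhds ?_
    (.of_forall fun n => gridApprox_le hm hc hφ0 h0 (by positivity) _ ht)
  filter_upwards [eventually_ge_atTop ⌈t⌉₊] with n hn
  refine sub_le_gridApprox hm hc h0 (by positivity) ht ?_
  have hmesh : (((n + 1) ^ 2 : ℕ) : ℝ) * (1 / ((n : ℝ) + 1)) = n + 1 := by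
    push_cast
    field_simp
  have htn : t ≤ n := (Nat.le_ceil t).trans (by exact_mod_cast hn)
  linarith

end gridApprox

theorem integral_convex_le_of_integral_pos_part_le_general
    {X : Type*} [MeasurableSpace X] (μ : Measure X)
    (f g : X → ℝ) (hf : Integrable f μ) (hg : Integrable g μ)
    (hf0 : 0 ≤ᵐ[μ] f) (hg0 : 0 ≤ᵐ[μ] g)
    (hcut : ∀ u : ℝ, 0 < u →
      ∫ x, max (g x - u) 0 ∂μ ≤ ∫ x, max (f x - u) 0 ∂μ) :
    ∀ φ : ℝ → ℝ, MonotoneOn φ (Set.Ici 0) → ConvexOn ℝ (Set.Ici 0) φ →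
      (∀ x : ℝ, 0 ≤ x → 0 ≤ φ x) → φ 0 = 0 →
      ∫⁻ x, ENNReal.ofReal (φ (g x)) ∂μ ≤ ∫⁻ x, ENNReal.ofReal (φ (f x)) ∂μ := by
  intro φ hm hc hφ0 h0
  set F : ℕ → ℝ → ℝ := fun n => gridApprox φ (1 / (n + 1)) ((n + 1) ^ 2)
  have hF_le : ∀ n, ∫⁻ x, ENNReal.ofReal (F n (g x)) ∂μ ≤ ∫⁻ x, ENNReal.ofReal (φ (f x)) ∂μ :=
    fun n => (lintegral_hingeSum_comp_le hf hg hcut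
        (gridSlope_succ_sub_nonneg hm hc (by positivity)) (fun k => by positivity) _).trans
      (lintegral_mono_ae (hf0.mono fun x hx =>
        ENNReal.ofReal_le_ofReal (gridApprox_le hm hc hφ0 h0 (by positivity) _ hx)))
  calc ∫⁻ x, ENNReal.ofReal (φ (g x)) ∂μ
      = ∫⁻ x, liminf (fun n => ENNReal.ofReal (F n (g x))) atTop ∂μ :=
        lintegral_congr_ae (hg0.mono fun x hx =>
          ((ENNReal.continuous_ofReal.tendsto _).comp
            (tendsto_gridApprox hm hc hφ0 h0 hx)).liminf_eq.symm)
    _ ≤ liminf (fun n => ∫⁻ x, ENNReal.ofReal (F n (g x)) ∂μ) atTop :=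
        lintegral_liminf_le' fun n => ENNReal.measurable_ofReal.comp_aemeasurable
          ((continuous_hingeSum _).measurable.comp_aemeasurable hg.aemeasurable)
    _ ≤ ∫⁻ x, ENNReal.ofReal (φ (f x)) ∂μ :=
        liminf_le_of_frequently_le' (.of_forall hF_le)

/-- Let `(X,μ)` be σ-finite and `f, g ∈ L¹(X,μ)` nonnegative with `∫ g dμ = ∫ f dμ`.  If
`∫ (g − u)⁺ dμ ≤ ∫ (f − u)⁺ dμ` for every real `u > 0`, then
`∫ φ∘g dμ ≤ ∫ φ∘f dμ` for every increasing convex `φ : [0,∞) → [0,∞)` with `φ(0) = 0`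
(the integrals of these nonnegative functions taken in `[0,∞]`). -/
theorem integral_convex_le_of_integral_pos_part_le
    {X : Type*} [MeasurableSpace X] (μ : Measure X) [SigmaFinite μ]
    (f g : X → ℝ) (hf : Integrable f μ) (hg : Integrable g μ)
    (hf0 : 0 ≤ᵐ[μ] f) (hg0 : 0 ≤ᵐ[μ] g)
    (heq : ∫ x, g x ∂μ = ∫ x, f x ∂μ)
    (hcut : ∀ u : ℝ, 0 < u →
      ∫ x, max (g x - u) 0 ∂μ ≤ ∫ x, max (f x - u) 0 ∂μ) :
    ∀ φ : ℝ → ℝ, MonotoneOn φ (Set.Ici 0) → ConvexOn ℝ (Set.Ici 0) φ →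
      (∀ x : ℝ, 0 ≤ x → 0 ≤ φ x) → φ 0 = 0 →
      ∫⁻ x, ENNReal.ofReal (φ (g x)) ∂μ ≤ ∫⁻ x, ENNReal.ofReal (φ (f x)) ∂μ :=
  integral_convex_le_of_integral_pos_part_le_general μ f g hf hg hf0 hg0 hcut
end
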